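/- arXiv:1009.3095 — 8 statements merged into one kernel-verified Lean document; each statement's English description precedes it below -/
import Mathlib

section
/- Let (μ_n)_{n≥1} be a nonincreasing sequence of nonnegative real numbers. Then sup_{k≥1} (1/k) Σ_{n=1}^∞ μ_n^{1+1/k} < ∞ (the sums taken in [0,∞]) if and only if sup_{N≥1} (1/log(1+N)) Σ_{n=1}^N μ_n < ∞. -/
open Filter Finset
open scoped ENNReal Topology

lemma key_ineq {δ x : ℝ} (hδ0 : 0 < δ) (hδ1 : δ ≤ 1) (hx : 1 ≤ x) :
    (x+1) ^ (-(1+δ)) ≤ (1/δ) * (x ^ (-δ) - (x+1) ^ (-δ)) := by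
  have hx0 : (0:ℝ) < x := lt_of_lt_of_le one_pos hx
  have hx1 : (0:ℝ) < x + 1 := by linarith
  set a : ℝ := δ / (x+1) with ha
  have ha0 : 0 < a := div_pos hδ0 hx1
  have ha1 : a < 1 := by rw [ha, div_lt_one hx1]; linarith
  have hP : (x/(x+1)) ^ δ ≤ 1 - a := by
    have hs : -1 ≤ -(1/(x+1)) := by
      rw [neg_le_neg_iff, div_le_one hx1]; linarith
    have := rpow_one_add_le_one_add_mul_self hs hδ0.le hδ1
    have hrw : (1 + -(1/(x+1))) = x/(x+1) := by field_simp; ring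
    rw [hrw] at this
    calc (x/(x+1)) ^ δ ≤ 1 + δ * -(1/(x+1)) := this
      _ = 1 - a := by rw [ha]; ring
  have hPpos : 0 < (x/(x+1)) ^ δ := Real.rpow_pos_of_pos (div_pos hx0 hx1) δ
  have hQpos : 0 < (x+1) ^ (-δ) := Real.rpow_pos_of_pos hx1 _
  have hRpos : 0 < x ^ (-δ) := Real.rpow_pos_of_pos hx0 _
  have hxsplit : x ^ (-δ) * (x/(x+1)) ^ δ = (x+1) ^ (-δ) := by
    rw [Real.div_rpow hx0.le hx1.le, Real.rpow_neg hx0.le, Real.rpow_neg hx1.le]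
    field_simp
  have hsplit2 : (x+1) ^ (-(1+δ)) = (x+1) ^ (-δ) * (x+1)⁻¹ := by
    rw [show -(1+δ) = -δ + -1 by ring, Real.rpow_add hx1, Real.rpow_neg_one]
  set P := (x/(x+1)) ^ δ
  set Q := (x+1) ^ (-δ)
  set R := x ^ (-δ)
  have hRQ : Q ≤ R := by nlinarith
  have key : Q * a ≤ R - Q := by nlinarith [mul_le_mul_of_nonneg_left hP hRpos.le]
  rw [hsplit2]
  have heq : Q * (x+1)⁻¹ = (1/δ) * (Q * a) := by
    rw [ha]; field_simp
  rw [heq]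
  exact mul_le_mul_of_nonneg_left key (by positivity)

lemma sum_rpow_bound {δ : ℝ} (hδ0 : 0 < δ) (hδ1 : δ ≤ 1) (N : ℕ) :
    ∑ n ∈ range N, ((n:ℝ)+1) ^ (-(1+δ)) ≤ 1 + 1/δ := by
  rcases Nat.eq_zero_or_pos N with rfl | hN
  · simp; positivity
  obtain ⟨M, rfl⟩ := Nat.exists_eq_add_of_le hN
  rw [add_comm, Finset.sum_range_succ']
  have h0 : ((0:ℕ):ℝ) + 1 = 1 := by norm_num
  set g : ℕ → ℝ := fun n => ((n:ℝ)+1) ^ (-δ) with hg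
  have step : ∀ n ∈ range M, ((n:ℝ)+1+1) ^ (-(1+δ)) ≤ (1/δ) * (g n - g (n+1)) := by
    intro n _
    have := key_ineq hδ0 hδ1 (by push_cast; linarith [Nat.cast_nonneg (α := ℝ) n] : (1:ℝ) ≤ (n:ℝ)+1)
    simpa [hg, mul_sub, Nat.cast_add] using this
  calc ∑ n ∈ range M, (((n+1:ℕ):ℝ)+1) ^ (-(1+δ)) + (((0:ℕ):ℝ)+1) ^ (-(1+δ))
      ≤ ∑ n ∈ range M, (1/δ) * (g n - g (n+1)) + 1 := by
        push_cast
        refine add_le_add (Finset.sum_le_sum step) ?_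
        norm_num [Real.one_rpow]
    _ = (1/δ) * (g 0 - g M) + 1 := by rw [← Finset.mul_sum, Finset.sum_range_sub' g M]
    _ ≤ 1 + 1/δ := by
        have hg0 : g 0 = 1 := by simp [hg]
        have hgM : 0 ≤ g M := Real.rpow_nonneg (by positivity) _
        rw [hg0]
        have : (1/δ) * (1 - g M) ≤ 1/δ := by
          have : 0 < 1/δ := by positivity
          nlinarith
        linarith

lemma abel_nonneg (a g : ℕ → ℝ) (N : ℕ) (hg : ∀ n, g (n+1) ≤ g n) (hg0 : ∀ n, 0 ≤ g n)
    (ha : ∀ m, m ≤ N → 0 ≤ ∑ n ∈ range m, a n) : 0 ≤ ∑ n ∈ range N, a n * g n := by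
  have hbp := Finset.sum_range_by_parts g a N
  simp only [smul_eq_mul] at hbp
  have : ∑ n ∈ range N, a n * g n = ∑ n ∈ range N, g n * a n := by
    apply Finset.sum_congr rfl; intro n _; ring
  rw [this, hbp]
  have h1 : 0 ≤ g (N-1) * ∑ i ∈ range N, a i :=
    mul_nonneg (hg0 _) (ha N le_rfl)
  have h2 : ∑ i ∈ range (N-1), (g (i+1) - g i) * ∑ j ∈ range (i+1), a j ≤ 0 := by
    apply Finset.sum_nonpos
    intro i hi
    simp only [Finset.mem_range] at hi
    apply mul_nonpos_of_nonpos_of_nonneg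
    · linarith [hg i]
    · exact ha (i+1) (by omega : i+1 ≤ N)
  linarith

lemma main_backward (μ : ℕ → ℝ) (hmono : Antitone μ) (hpos : ∀ n, 0 ≤ μ n) (B : ℝ)
    (hB1 : 1 ≤ B) (hS : ∀ N : ℕ, 1 ≤ N → ∑ n ∈ range N, μ n ≤ B * Real.log (1 + (N:ℝ)))
    (k : ℕ) (hk : 1 ≤ k) (N : ℕ) :
    ∑ n ∈ range N, μ n ^ (1 + 1/(k:ℝ)) ≤ 12 * B^2 * k := by
  have hk0 : (0:ℝ) < k := by exact_mod_cast hk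
  have hk1 : (1:ℝ) ≤ k := by exact_mod_cast hk
  set g : ℕ → ℝ := fun n => μ n ^ (1/(k:ℝ)) with hgdef
  have hg0 : ∀ n, 0 ≤ g n := fun n => Real.rpow_nonneg (hpos n) _
  have hgmono : ∀ n, g (n+1) ≤ g n := fun n =>
    Real.rpow_le_rpow (hpos _) (hmono (Nat.le_succ n)) (by positivity)
  -- pointwise bound on μ
  have hpt : ∀ n : ℕ, μ n ≤ B * Real.log ((n:ℝ)+2) / ((n:ℝ)+1) := by
    intro n
    have hcard : ((n+1 : ℕ)) • μ n ≤ ∑ m ∈ range (n+1), μ m := by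
      have := Finset.card_nsmul_le_sum (range (n+1)) μ (μ n)
        (fun m hm => hmono (by simp at hm; omega))
      simpa using this
    have hsum := hS (n+1) (by omega)
    rw [nsmul_eq_mul] at hcard
    push_cast at hcard hsum
    have h2 : ((n:ℝ)+1) * μ n ≤ B * Real.log ((n:ℝ)+2) := by
      have e : (1 + ((n:ℝ)+1)) = (n:ℝ)+2 := by ring
      rw [← e]; exact hcard.trans hsum
    rw [le_div_iff₀ (by positivity : (0:ℝ) < (n:ℝ)+1)]
    nlinarith
  -- bound on g
  have hgbd : ∀ n : ℕ, g n ≤ 4 * B * ((n:ℝ)+1) ^ (-(1/(2*(k:ℝ)))) := by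
    intro n
    have hn1 : (0:ℝ) < (n:ℝ)+1 := by positivity
    have hn2 : (0:ℝ) < (n:ℝ)+2 := by positivity
    have hppos : (0:ℝ) < ((n:ℝ)+1) ^ ((1:ℝ)/2) := Real.rpow_pos_of_pos hn1 _
    have hlog : Real.log ((n:ℝ)+2) ≤ 2 * ((n:ℝ)+2) ^ ((1:ℝ)/2) := by
      have h1 : Real.log (((n:ℝ)+2) ^ ((1:ℝ)/2)) ≤ ((n:ℝ)+2) ^ ((1:ℝ)/2) - 1 :=
        Real.log_le_sub_one_of_pos (Real.rpow_pos_of_pos hn2 _)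
      have h2 : Real.log (((n:ℝ)+2) ^ ((1:ℝ)/2)) = (1/2) * Real.log ((n:ℝ)+2) :=
        Real.log_rpow hn2 _
      linarith [h2.symm.le, h2.le]
    have hsqrt : ((n:ℝ)+2) ^ ((1:ℝ)/2) ≤ 2 * ((n:ℝ)+1) ^ ((1:ℝ)/2) := by
      have h1 : ((n:ℝ)+2) ^ ((1:ℝ)/2) ≤ (4*((n:ℝ)+1)) ^ ((1:ℝ)/2) :=
        Real.rpow_le_rpow hn2.le (by linarith) (by norm_num)
      have h2 : ((4:ℝ)*((n:ℝ)+1)) ^ ((1:ℝ)/2) = 4 ^ ((1:ℝ)/2) * ((n:ℝ)+1) ^ ((1:ℝ)/2) :=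
        Real.mul_rpow (by norm_num) hn1.le
      have h3 : (4:ℝ) ^ ((1:ℝ)/2) = 2 := by
        rw [show (4:ℝ) = 2^(2:ℕ) by norm_num, ← Real.rpow_natCast 2 2,
          ← Real.rpow_mul (by norm_num)]
        norm_num
      rw [h2, h3] at h1; exact h1
    have hmu : μ n ≤ 4 * B * ((n:ℝ)+1) ^ (-((1:ℝ)/2)) := by
      have hdiv : ((n:ℝ)+1) ^ (-((1:ℝ)/2)) = ((n:ℝ)+1) ^ ((1:ℝ)/2) / ((n:ℝ)+1) := by
        rw [Real.rpow_neg hn1.le]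
        have hsq : ((n:ℝ)+1) ^ ((1:ℝ)/2) * ((n:ℝ)+1) ^ ((1:ℝ)/2) = (n:ℝ)+1 := by
          rw [← Real.rpow_add hn1]; norm_num
        field_simp
        linarith [hsq]
      rw [hdiv, ← mul_div_assoc]
      refine (hpt n).trans ?_
      rw [div_le_div_iff_of_pos_right hn1]
      nlinarith [mul_le_mul_of_nonneg_left hlog (by linarith : (0:ℝ) ≤ B),
        mul_le_mul_of_nonneg_left hsqrt (by linarith : (0:ℝ) ≤ 2*B)]
    -- raise to power 1/k
    have hstep : g n ≤ (4 * B * ((n:ℝ)+1) ^ (-((1:ℝ)/2))) ^ (1/(k:ℝ)) :=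
      Real.rpow_le_rpow (hpos n) hmu (by positivity)
    have hsplit : (4 * B * ((n:ℝ)+1) ^ (-((1:ℝ)/2))) ^ (1/(k:ℝ))
        = (4*B) ^ (1/(k:ℝ)) * (((n:ℝ)+1) ^ (-((1:ℝ)/2))) ^ (1/(k:ℝ)) :=
      Real.mul_rpow (by linarith) (Real.rpow_nonneg hn1.le _)
    have hexp : (((n:ℝ)+1) ^ (-((1:ℝ)/2))) ^ (1/(k:ℝ)) = ((n:ℝ)+1) ^ (-(1/(2*(k:ℝ)))) := by
      rw [← Real.rpow_mul hn1.le]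
      congr 1
      field_simp
    have h4B : (4*B) ^ (1/(k:ℝ)) ≤ 4*B := by
      have h1 : (4*B) ^ (1/(k:ℝ)) ≤ (4*B) ^ (1:ℝ) :=
        Real.rpow_le_rpow_of_exponent_le (by linarith) (by rw [div_le_one hk0]; exact hk1)
      rwa [Real.rpow_one] at h1
    calc g n ≤ (4 * B * ((n:ℝ)+1) ^ (-((1:ℝ)/2))) ^ (1/(k:ℝ)) := hstep
      _ = (4*B) ^ (1/(k:ℝ)) * (((n:ℝ)+1) ^ (-((1:ℝ)/2))) ^ (1/(k:ℝ)) := hsplit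
      _ ≤ 4*B * (((n:ℝ)+1) ^ (-((1:ℝ)/2))) ^ (1/(k:ℝ)) :=
          mul_le_mul_of_nonneg_right h4B (Real.rpow_nonneg (Real.rpow_nonneg hn1.le _) _)
      _ = 4 * B * ((n:ℝ)+1) ^ (-(1/(2*(k:ℝ)))) := by rw [hexp]
  -- Abel summation step
  set d : ℕ → ℝ := fun n => Real.log ((n:ℝ)+2) - Real.log ((n:ℝ)+1) with hd
  have hdsum : ∀ m : ℕ, ∑ n ∈ range m, d n = Real.log ((m:ℝ)+1) := by
    intro m
    have ht := Finset.sum_range_sub (fun n => Real.log ((n:ℝ)+1)) m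
    have he : ∑ n ∈ range m, d n
        = ∑ n ∈ range m, ((fun n : ℕ => Real.log ((n:ℝ)+1)) (n+1)
          - (fun n : ℕ => Real.log ((n:ℝ)+1)) n) := by
      apply Finset.sum_congr rfl; intro n _
      simp only [hd]; push_cast; ring_nf
    rw [he, ht]
    norm_num
  have habel : ∑ n ∈ range N, μ n * g n ≤ B * ∑ n ∈ range N, d n * g n := by
    have hps : ∀ m, m ≤ N → 0 ≤ ∑ n ∈ range m, (B * d n - μ n) := by
      intro m hm
      rw [Finset.sum_sub_distrib, ← Finset.mul_sum, hdsum]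
      rcases Nat.eq_zero_or_pos m with rfl | hm1
      · simp
      · have := hS m hm1
        rw [add_comm (1:ℝ) (m:ℝ)] at this
        linarith
    have h := abel_nonneg (fun n => B * d n - μ n) g N hgmono hg0 hps
    have he : ∑ n ∈ range N, (B * d n - μ n) * g n
        = B * ∑ n ∈ range N, d n * g n - ∑ n ∈ range N, μ n * g n := by
      rw [Finset.mul_sum, ← Finset.sum_sub_distrib]
      apply Finset.sum_congr rfl; intro n _; ring
    rw [he] at h
    linarith
  have hexpand : ∀ n, μ n ^ (1+1/(k:ℝ)) = μ n * g n := by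
    intro n
    rw [Real.rpow_add' (hpos n) (by positivity : (1:ℝ)+1/(k:ℝ) ≠ 0), Real.rpow_one]
  have hdle : ∀ n : ℕ, d n ≤ 1/((n:ℝ)+1) := by
    intro n
    have hn1 : (0:ℝ) < (n:ℝ)+1 := by positivity
    have hq : (0:ℝ) < ((n:ℝ)+2)/((n:ℝ)+1) := by positivity
    have h1 := Real.log_le_sub_one_of_pos hq
    rw [Real.log_div (by positivity) hn1.ne'] at h1
    have h2 : ((n:ℝ)+2)/((n:ℝ)+1) - 1 = 1/((n:ℝ)+1) := by
      field_simp
      norm_num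
    simp only [hd]
    linarith
  have hd0 : ∀ n : ℕ, 0 ≤ d n := by
    intro n
    simp only [hd, sub_nonneg]
    exact Real.log_le_log (by positivity) (by linarith)
  set δ : ℝ := 1/(2*(k:ℝ)) with hδ
  have hδ0 : 0 < δ := by positivity
  have hδ1 : δ ≤ 1 := by
    rw [hδ, div_le_one (by positivity)]; linarith
  have hterm : ∀ n ∈ range N, d n * g n ≤ 4*B * ((n:ℝ)+1) ^ (-(1+δ)) := by
    intro n _
    have hn1 : (0:ℝ) < (n:ℝ)+1 := by positivity
    have h1 : d n * g n ≤ (1/((n:ℝ)+1)) * (4 * B * ((n:ℝ)+1) ^ (-δ)) :=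
      mul_le_mul (hdle n) (hgbd n) (hg0 n) (by positivity)
    have h2 : (1/((n:ℝ)+1)) * (4 * B * ((n:ℝ)+1) ^ (-δ)) = 4*B * ((n:ℝ)+1) ^ (-(1+δ)) := by
      rw [show -(1+δ) = -1 + -δ by ring, Real.rpow_add hn1, Real.rpow_neg_one]
      ring
    exact le_of_le_of_eq h1 h2
  have hsum2 : ∑ n ∈ range N, d n * g n ≤ 4*B * (1 + 1/δ) := by
    calc ∑ n ∈ range N, d n * g n ≤ ∑ n ∈ range N, 4*B * ((n:ℝ)+1) ^ (-(1+δ)) :=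
          Finset.sum_le_sum hterm
      _ = 4*B * ∑ n ∈ range N, ((n:ℝ)+1) ^ (-(1+δ)) := by rw [Finset.mul_sum]
      _ ≤ 4*B * (1 + 1/δ) := by
          apply mul_le_mul_of_nonneg_left (sum_rpow_bound hδ0 hδ1 N) (by linarith)
  have hfin : (1:ℝ) + 1/δ = 1 + 2*(k:ℝ) := by
    rw [hδ]; field_simp
  calc ∑ n ∈ range N, μ n ^ (1+1/(k:ℝ)) = ∑ n ∈ range N, μ n * g n := by
        apply Finset.sum_congr rfl; intro n _; exact hexpand n
    _ ≤ B * ∑ n ∈ range N, d n * g n := habel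
    _ ≤ B * (4*B * (1 + 1/δ)) := mul_le_mul_of_nonneg_left hsum2 (by linarith)
    _ = 4*B^2 * (1 + 2*(k:ℝ)) := by rw [hfin]; ring
    _ ≤ 12 * B^2 * k := by nlinarith

lemma main_forward (μ : ℕ → ℝ) (hpos : ∀ n, 0 ≤ μ n) (A : ℝ) (hA : 0 ≤ A)
    (h : ∀ k : ℕ, 1 ≤ k → ∀ N : ℕ, ∑ n ∈ range N, μ n ^ (1 + 1/(k:ℝ)) ≤ A * k)
    (N : ℕ) (hN : 1 ≤ N) :
    ∑ n ∈ range N, μ n ≤ Real.exp 1 * (A * (Real.log N + 2) + 1) := by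
  have hN1 : (1:ℝ) ≤ N := by exact_mod_cast hN
  have hlogN : 0 ≤ Real.log N := Real.log_nonneg hN1
  set k : ℕ := ⌈Real.log N⌉₊ + 1 with hkdef
  have hk : 1 ≤ k := by omega
  have hk0 : (0:ℝ) < k := by exact_mod_cast hk
  have hlogk : Real.log N ≤ k := by
    calc Real.log N ≤ (⌈Real.log N⌉₊ : ℝ) := Nat.le_ceil _
      _ ≤ k := by push_cast [hkdef]; linarith
  have hkle : (k:ℝ) ≤ Real.log N + 2 := by
    have := Nat.ceil_lt_add_one hlogN
    push_cast [hkdef]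
    linarith
  set p : ℝ := 1 + 1/(k:ℝ) with hp
  set q : ℝ := (k:ℝ) + 1 with hq
  have hpq : p.HolderConjugate q := by
    constructor
    · rw [hp, hq, inv_one]; have : (k:ℝ) ≠ 0 := hk0.ne'
      field_simp
    · rw [hp]; positivity
    · rw [hq]; positivity
  have holder := Real.inner_le_Lp_mul_Lq_of_nonneg (s := range N)
    (f := μ) (g := fun _ => (1:ℝ)) hpq (fun i _ => hpos i) (fun i _ => zero_le_one)
  simp only [mul_one, Real.one_rpow, Finset.sum_const, Finset.card_range,
    nsmul_eq_mul] at holder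
  -- holder : ∑ μ ≤ (∑ μ^p)^(1/p) * (N * 1)^(1/q)  roughly
  have hsum_nonneg : 0 ≤ ∑ n ∈ range N, μ n ^ p :=
    Finset.sum_nonneg fun n _ => Real.rpow_nonneg (hpos n) _
  have hb1 : (∑ n ∈ range N, μ n ^ p) ^ (1/p) ≤ A * k + 1 := by
    have h1 : (∑ n ∈ range N, μ n ^ p) ^ (1/p) ≤ (A*k) ^ (1/p) :=
      Real.rpow_le_rpow hsum_nonneg (h k hk N) (by positivity)
    have hAk : 0 ≤ A * (k:ℝ) := by positivity
    rcases le_or_gt 1 (A*(k:ℝ)) with hc | hc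
    · have h2 : (A*(k:ℝ)) ^ (1/p) ≤ (A*(k:ℝ)) ^ (1:ℝ) := by
        apply Real.rpow_le_rpow_of_exponent_le hc
        rw [hp, div_le_one (by positivity)]
        have : 0 < 1/(k:ℝ) := by positivity
        linarith
      rw [Real.rpow_one] at h2
      linarith
    · have h2 : (A*(k:ℝ)) ^ (1/p) ≤ 1 := Real.rpow_le_one hAk hc.le (by positivity)
      linarith
  have hb2 : (N:ℝ) ^ (1/q) ≤ Real.exp 1 := by
    have hNpos : (0:ℝ) < N := by linarith
    rw [Real.rpow_def_of_pos hNpos]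
    apply Real.exp_le_exp.mpr
    rw [hq, mul_one_div, div_le_one (by positivity)]
    linarith
  have hfinal : ∑ n ∈ range N, μ n ≤ (A*k+1) * Real.exp 1 := by
    calc ∑ n ∈ range N, μ n ≤ (∑ n ∈ range N, μ n ^ p) ^ (1/p) * (N:ℝ) ^ (1/q) := holder
      _ ≤ (A*k+1) * Real.exp 1 := by
          apply mul_le_mul hb1 hb2 (Real.rpow_nonneg (by positivity) _) (by positivity)
  calc ∑ n ∈ range N, μ n ≤ (A*k+1) * Real.exp 1 := hfinal
    _ ≤ Real.exp 1 * (A * (Real.log N + 2) + 1) := by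
        rw [mul_comm]
        apply mul_le_mul_of_nonneg_left _ (Real.exp_pos 1).le
        nlinarith

/-- Let `(μ_n)_{n≥1}` be a nonincreasing sequence of nonnegative reals
(here `μ (n : ℕ)` stands for `μ_{n+1}`).  Then
`sup_{k≥1} (1/k) ∑_{n=1}^∞ μ_n^{1+1/k} < ∞` (sums in `[0,∞]`) iff
`sup_{N≥1} (1/log(1+N)) ∑_{n=1}^N μ_n < ∞`. -/
theorem statement5 (μ : ℕ → ℝ) (hmono : Antitone μ) (hpos : ∀ n, 0 ≤ μ n) :
    (⨆ k : ℕ, ⨆ _ : 1 ≤ k,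
        (∑' n : ℕ, ENNReal.ofReal (μ n ^ (1 + 1 / (k : ℝ)))) / (k : ℝ≥0∞)) ≠ ⊤ ↔
      ∃ B : ℝ, ∀ N : ℕ, 1 ≤ N →
        (1 / Real.log (1 + (N : ℝ))) * ∑ n ∈ Finset.range N, μ n ≤ B := by
  have hlog2 : (0:ℝ) < Real.log 2 := Real.log_pos (by norm_num)
  constructor
  · intro hsup
    set T : ℝ≥0∞ := ⨆ k : ℕ, ⨆ _ : 1 ≤ k,
        (∑' n : ℕ, ENNReal.ofReal (μ n ^ (1 + 1 / (k : ℝ)))) / (k : ℝ≥0∞) with hT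
    set A : ℝ := T.toReal with hA
    have hA0 : 0 ≤ A := ENNReal.toReal_nonneg
    have hbound : ∀ k : ℕ, 1 ≤ k → ∀ N : ℕ,
        ∑ n ∈ range N, μ n ^ (1 + 1/(k:ℝ)) ≤ A * k := by
      intro k hk N
      have hk0 : (k:ℝ≥0∞) ≠ 0 := Nat.cast_ne_zero.mpr (by omega)
      have hkt : (k:ℝ≥0∞) ≠ ⊤ := ENNReal.natCast_ne_top k
      have hle : (∑' n : ℕ, ENNReal.ofReal (μ n ^ (1 + 1 / (k : ℝ)))) / (k : ℝ≥0∞) ≤ T := by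
        rw [hT]
        exact le_iSup_of_le k (le_iSup_of_le hk le_rfl)
      have htsum : (∑' n : ℕ, ENNReal.ofReal (μ n ^ (1 + 1 / (k : ℝ)))) ≤ T * k :=
        (ENNReal.div_le_iff_le_mul (Or.inl hk0) (Or.inl hkt)).mp hle
      have hTk : T * k ≠ ⊤ := ENNReal.mul_ne_top hsup hkt
      have hpart : ENNReal.ofReal (∑ n ∈ range N, μ n ^ (1 + 1/(k:ℝ))) ≤ T * k := by
        rw [ENNReal.ofReal_sum_of_nonneg (fun i _ => Real.rpow_nonneg (hpos i) _)]
        exact le_trans (ENNReal.summable.sum_le_tsum (range N) (fun i _ => zero_le)) htsum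
      have := (ENNReal.ofReal_le_iff_le_toReal hTk).mp hpart
      rw [ENNReal.toReal_mul] at this
      simpa [hA] using this
    refine ⟨Real.exp 1 * (A + (2*A+1)/Real.log 2), ?_⟩
    intro N hN
    have hN1 : (1:ℝ) ≤ N := by exact_mod_cast hN
    have hL0 : 0 < Real.log (1 + (N:ℝ)) := Real.log_pos (by linarith)
    have hL2 : Real.log 2 ≤ Real.log (1 + (N:ℝ)) :=
      Real.log_le_log (by norm_num) (by linarith)
    have hlogN : Real.log N ≤ Real.log (1 + (N:ℝ)) :=
      Real.log_le_log (by linarith) (by linarith)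
    have hmf := main_forward μ hpos A hA0 hbound N hN
    set L := Real.log (1 + (N:ℝ))
    rw [one_div, inv_mul_le_iff₀ hL0]
    have hexp : (0:ℝ) < Real.exp 1 := Real.exp_pos 1
    have hD : (2*A+1) ≤ L * ((2*A+1)/Real.log 2) := by
      rw [mul_div_assoc', le_div_iff₀ hlog2]
      nlinarith
    calc ∑ n ∈ range N, μ n ≤ Real.exp 1 * (A * (Real.log N + 2) + 1) := hmf
      _ ≤ Real.exp 1 * (A * L + (2*A+1)) := by
          apply mul_le_mul_of_nonneg_left _ hexp.le
          nlinarith [mul_le_mul_of_nonneg_left hlogN hA0]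
      _ ≤ L * (Real.exp 1 * (A + (2*A+1)/Real.log 2)) := by
          nlinarith [mul_le_mul_of_nonneg_left hD hexp.le]
  · rintro ⟨B, hB⟩
    set B1 : ℝ := max B 1 with hB1def
    have hB1 : 1 ≤ B1 := le_max_right _ _
    have hS : ∀ N : ℕ, 1 ≤ N → ∑ n ∈ range N, μ n ≤ B1 * Real.log (1 + (N:ℝ)) := by
      intro N hN
      have hN1 : (1:ℝ) ≤ N := by exact_mod_cast hN
      have hL0 : 0 < Real.log (1 + (N:ℝ)) := Real.log_pos (by linarith)
      have h1 := (hB N hN).trans (le_max_left B 1)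
      rw [one_div, inv_mul_le_iff₀ hL0] at h1
      rw [mul_comm]
      exact h1
    set C : ℝ := 12 * B1^2 with hC
    have hC0 : 0 ≤ C := by positivity
    have hfin : ∀ k : ℕ, 1 ≤ k →
        (∑' n : ℕ, ENNReal.ofReal (μ n ^ (1 + 1 / (k : ℝ)))) / (k : ℝ≥0∞)
          ≤ ENNReal.ofReal C := by
      intro k hk
      have hk0 : (k:ℝ≥0∞) ≠ 0 := Nat.cast_ne_zero.mpr (by omega)
      have hkt : (k:ℝ≥0∞) ≠ ⊤ := ENNReal.natCast_ne_top k
      rw [ENNReal.div_le_iff_le_mul (Or.inl hk0) (Or.inl hkt)]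
      have hmul : ENNReal.ofReal C * (k:ℝ≥0∞) = ENNReal.ofReal (C * k) := by
        rw [ENNReal.ofReal_mul hC0, ENNReal.ofReal_natCast]
      rw [hmul]
      apply ENNReal.tsum_le_of_sum_range_le
      intro N
      rw [← ENNReal.ofReal_sum_of_nonneg (fun i _ => Real.rpow_nonneg (hpos i) _)]
      exact ENNReal.ofReal_le_ofReal (main_backward μ hmono hpos B1 hB1 hS k hk N)
    have : (⨆ k : ℕ, ⨆ _ : 1 ≤ k,
        (∑' n : ℕ, ENNReal.ofReal (μ n ^ (1 + 1 / (k : ℝ)))) / (k : ℝ≥0∞))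
          ≤ ENNReal.ofReal C := iSup_le fun k => iSup_le fun hk => hfin k hk
    exact ne_top_of_le_ne_top ENNReal.ofReal_ne_top this
end

section
/- Let (a_k)_{k≥0} be a bounded real sequence, p(a) the step function on [0,∞) with p(a)(t) = a_k for t ∈ [k, k+1), and C the Cesàro operators C(a)_n = (1/(n+1)) Σ_{k=0}^n a_k on sequences and C(f)(t) = (1/t) ∫_0^t f(s) ds on functions. Then (1/t) ∫_0^t p(a)(s) ds − p(C(a))(t) → 0 as t → ∞. -/
open Filter Finset
open scoped Topology

open MeasureTheory

lemma step_intInt (a : ℕ → ℝ) (C : ℝ) (hC : ∀ k, |a k| ≤ C) (x y : ℝ) :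
    IntervalIntegrable (fun s : ℝ => a ⌊s⌋₊) volume x y := by
  rw [intervalIntegrable_iff]
  apply MeasureTheory.Integrable.mono' (g := fun _ => C)
  · exact (integrableOn_const_iff).mpr (Or.inr measure_Ioc_lt_top)
  · exact ((measurable_from_top).comp Nat.measurable_floor).aestronglyMeasurable
  · filter_upwards with s using by simpa using hC ⌊s⌋₊

lemma step_piece (a : ℕ → ℝ) (k : ℕ) (x y : ℝ)
    (hx : (k:ℝ) ≤ x) (hxy : x ≤ y) (hy : y ≤ (k:ℝ)+1) :
    ∫ s in x..y, a ⌊s⌋₊ = (y - x) * a k := by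
  have hne : ∀ᵐ s : ℝ, s ≠ ((k:ℝ)+1) := by
    rw [ae_iff]
    simpa using Real.volume_singleton (a := (k:ℝ)+1)
  have h : ∀ᵐ s : ℝ, s ∈ Set.uIoc x y → a ⌊s⌋₊ = a k := by
    filter_upwards [hne] with s hs hmem
    rw [Set.uIoc_of_le hxy] at hmem
    have h1 : (k:ℝ) ≤ s := le_trans hx (le_of_lt hmem.1)
    have h2 : s < (k:ℝ)+1 := lt_of_le_of_ne (le_trans hmem.2 hy) hs
    have hf : ⌊s⌋₊ = k := by
      rw [Nat.floor_eq_iff (le_trans (Nat.cast_nonneg k) h1)]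
      exact ⟨h1, by push_cast; exact h2⟩
    rw [hf]
  rw [intervalIntegral.integral_congr_ae h, intervalIntegral.integral_const,
    smul_eq_mul]

/-- For a bounded real sequence `a`, with `p(a)` the step function
`p(a)(t) = a ⌊t⌋` and `C` the Cesàro operators on sequences and functions,
`C(p(a))(t) − p(C(a))(t) → 0` as `t → ∞`. -/
theorem statement9 (a : ℕ → ℝ) (hbd : ∃ C : ℝ, ∀ k, |a k| ≤ C) :
    Tendsto
      (fun t : ℝ =>
        (1 / t) * (∫ s in (0 : ℝ)..t, a ⌊s⌋₊) -
          (1 / ((⌊t⌋₊ : ℝ) + 1)) * ∑ k ∈ Finset.range (⌊t⌋₊ + 1), a k)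
      atTop (𝓝 0) := by
  obtain ⟨C, hC⟩ := hbd
  have hC0 : 0 ≤ C := le_trans (abs_nonneg _) (hC 0)
  refine squeeze_zero_norm' (a := fun t : ℝ => 2*C/t) ?_ ?_
  · filter_upwards [eventually_ge_atTop (1:ℝ)] with t ht
    have ht0 : (0:ℝ) < t := by linarith
    set n := ⌊t⌋₊ with hn
    set N : ℝ := (n:ℝ) with hN
    have hN0 : 0 ≤ N := Nat.cast_nonneg n
    have hn1 : N ≤ t := Nat.floor_le (by linarith)
    have hn2 : t < N + 1 := Nat.lt_floor_add_one t
    have hNpos : (0:ℝ) < N + 1 := by linarith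
    have hsplit : (∫ s in (0:ℝ)..t, a ⌊s⌋₊) =
        (∑ k ∈ Finset.range n, a k) + (t - N) * a n := by
      have h1 : (∫ s in (0:ℝ)..(N:ℝ), a ⌊s⌋₊) = ∑ k ∈ Finset.range n, a k := by
        have hadj := intervalIntegral.sum_integral_adjacent_intervals
          (a := fun k : ℕ => (k:ℝ)) (f := fun s => a ⌊s⌋₊) (μ := volume) (n := n)
          (fun k _ => step_intInt a C hC _ _)
        simp only [Nat.cast_zero] at hadj
        rw [hN, ← hadj]
        refine Finset.sum_congr rfl fun k _ => ?_
        rw [step_piece a k _ _ le_rfl (by push_cast; linarith) (by push_cast; linarith)]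
        push_cast; ring
      have h2 : (∫ s in (N:ℝ)..t, a ⌊s⌋₊) = (t - N) * a n := by
        exact step_piece a n _ _ le_rfl hn1 (by linarith)
      rw [← intervalIntegral.integral_add_adjacent_intervals
        (step_intInt a C hC 0 N) (step_intInt a C hC N t), h1, h2]
    rw [hsplit]
    set S : ℝ := ∑ k ∈ Finset.range (n+1), a k with hS
    have hsum : ∑ k ∈ Finset.range n, a k = S - a n := by
      rw [hS, Finset.sum_range_succ]; ring
    have hSbd : |S| ≤ C * (N + 1) := by
      calc |S| ≤ ∑ k ∈ Finset.range (n+1), |a k| := Finset.abs_sum_le_sum_abs _ _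
        _ ≤ ∑ _k ∈ Finset.range (n+1), C := Finset.sum_le_sum fun k _ => hC k
        _ = C * (N + 1) := by simp [hN]; push_cast; ring
    have han := hC n
    have hexpr : (1 / t) * ((S - a n) + (t - N) * a n) - (1 / (N+1)) * S =
        (S * (N + 1 - t) - a n * (N + 1 - t) * (N + 1)) / (t * (N + 1)) := by
      field_simp
      ring
    rw [hsum, hexpr]
    have hu0 : 0 < N + 1 - t := by linarith
    have hu1 : N + 1 - t ≤ 1 := by linarith
    have hnum : |S * (N + 1 - t) - a n * (N + 1 - t) * (N + 1)| ≤ 2 * C * (N + 1) := by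
      have h1 : |S * (N + 1 - t)| ≤ C * (N + 1) := by
        rw [abs_mul, abs_of_pos hu0]
        nlinarith [abs_nonneg S]
      have h2 : |a n * (N + 1 - t) * (N + 1)| ≤ C * (N + 1) := by
        rw [abs_mul, abs_mul, abs_of_pos hu0, abs_of_pos hNpos]
        nlinarith [mul_nonneg (mul_nonneg (sub_nonneg.mpr han) hu0.le) hNpos.le,
          mul_nonneg (mul_nonneg (abs_nonneg (a n)) (sub_nonneg.mpr hu1)) hNpos.le]
      calc |S * (N + 1 - t) - a n * (N + 1 - t) * (N + 1)|
          ≤ |S * (N + 1 - t)| + |a n * (N + 1 - t) * (N + 1)| := abs_sub _ _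
        _ ≤ 2 * C * (N + 1) := by linarith
    rw [Real.norm_eq_abs, abs_div, abs_of_pos (by positivity : (0:ℝ) < t * (N+1))]
    calc |S * (N + 1 - t) - a n * (N + 1 - t) * (N + 1)| / (t * (N + 1))
        ≤ (2 * C * (N + 1)) / (t * (N + 1)) := by gcongr
      _ = 2 * C / t := by
          rw [mul_comm t (N+1), mul_comm (2*C) (N+1),
            mul_div_mul_left _ _ (ne_of_gt hNpos)]
  · have : Tendsto (fun t : ℝ => (2*C) * t⁻¹) atTop (𝓝 ((2*C) * 0)) :=
      tendsto_inv_atTop_zero.const_mul _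
    simpa [div_eq_mul_inv] using this
end

section
/- Let (a_k)_{k≥0} be a bounded real sequence, p_c(a) the piecewise-linear interpolation p_c(a)(t) = a_k + (t−k)(a_{k+1} − a_k) for t ∈ [k, k+1), and C the Cesàro operators C(a)_n = (1/(n+1)) Σ_{k=0}^n a_k on sequences and C(f)(t) = (1/t) ∫_0^t f(s) ds on functions. Then C(p_c(a))(t) − p_c(C(a))(t) → 0 as t → ∞. -/
open Filter Finset
open scoped Topology

/-- The Cesàro operator on sequences: `C(a)_n = (1/(n+1)) ∑_{k=0}^n a_k`. -/
noncomputable def cesaroSeq (a : ℕ → ℝ) (n : ℕ) : ℝ :=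
  (1 / ((n : ℝ) + 1)) * ∑ k ∈ Finset.range (n + 1), a k

/-- The piecewise-linear interpolation of a sequence:
`p_c(a)(t) = a_k + (t−k)(a_{k+1} − a_k)` for `t ∈ [k, k+1)`. -/
noncomputable def interpSeq (a : ℕ → ℝ) (t : ℝ) : ℝ :=
  a ⌊t⌋₊ + (t - (⌊t⌋₊ : ℝ)) * (a (⌊t⌋₊ + 1) - a ⌊t⌋₊)

open MeasureTheory intervalIntegral

lemma interp_meas (a : ℕ → ℝ) : Measurable (interpSeq a) := by
  unfold interpSeq
  have h : Measurable fun t : ℝ => (⌊t⌋₊ : ℕ) := Nat.measurable_floor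
  have h1 : Measurable fun t : ℝ => a ⌊t⌋₊ := (measurable_from_top (f := a)).comp h
  have h2 : Measurable fun t : ℝ => a (⌊t⌋₊ + 1) :=
    (measurable_from_top (f := fun n => a (n+1))).comp h
  have h3 : Measurable fun t : ℝ => ((⌊t⌋₊ : ℕ) : ℝ) := measurable_from_top.comp h
  fun_prop

lemma interp_bound (a : ℕ → ℝ) (M : ℝ) (hM : ∀ k, |a k| ≤ M) (t : ℝ) (ht : 0 ≤ t) :
    |interpSeq a t| ≤ 3 * M := by
  have h1 := Nat.floor_le ht
  have h2 := Nat.lt_floor_add_one t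
  have b1 := hM ⌊t⌋₊; have b2 := hM (⌊t⌋₊ + 1)
  have := abs_sub (a (⌊t⌋₊+1)) (a ⌊t⌋₊)
  unfold interpSeq
  have habs : |(t - (⌊t⌋₊ : ℝ)) * (a (⌊t⌋₊ + 1) - a ⌊t⌋₊)| ≤ 1 * (|a (⌊t⌋₊+1)| + |a ⌊t⌋₊|) := by
    rw [abs_mul]
    have := abs_sub (a (⌊t⌋₊ + 1)) (a ⌊t⌋₊)
    have h4 : |t - (⌊t⌋₊ : ℝ)| ≤ 1 := by rw [abs_of_nonneg (by linarith)]; linarith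
    nlinarith [abs_nonneg (a (⌊t⌋₊+1) - a ⌊t⌋₊)]
  calc |a ⌊t⌋₊ + (t - (⌊t⌋₊ : ℝ)) * (a (⌊t⌋₊ + 1) - a ⌊t⌋₊)|
      ≤ |a ⌊t⌋₊| + |(t - (⌊t⌋₊ : ℝ)) * (a (⌊t⌋₊ + 1) - a ⌊t⌋₊)| := abs_add_le _ _
    _ ≤ 3 * M := by nlinarith [abs_nonneg (a ⌊t⌋₊)]

lemma interp_intble (a : ℕ → ℝ) (M : ℝ) (hM : ∀ k, |a k| ≤ M) (x y : ℝ) (hx : 0 ≤ x)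
    (hy : 0 ≤ y) : IntervalIntegrable (interpSeq a) volume x y := by
  rw [intervalIntegrable_iff]
  apply Measure.integrableOn_of_bounded (M := 3*M) measure_Ioc_lt_top.ne
    (interp_meas a).aestronglyMeasurable
  filter_upwards [ae_restrict_mem measurableSet_uIoc] with s hs
  have hx' : 0 ≤ x ⊓ y := le_min hx hy
  have : 0 ≤ s := le_of_lt (lt_of_le_of_lt hx' hs.1)
  simpa using interp_bound a M hM s this

lemma affine_int (c d x y : ℝ) :
    ∫ s in x..y, (c + (s - x) * d) = (y - x) * c + (y - x)^2 / 2 * d := by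
  have h1 : ∫ s in x..y, (s - x) = (y - x)^2 / 2 := by
    rw [intervalIntegral.integral_comp_sub_right (fun u => u) x]
    simp [integral_id]
  rw [intervalIntegral.integral_add (intervalIntegrable_const)
    ((by fun_prop : Continuous fun s : ℝ => (s - x) * d).intervalIntegrable _ _)]
  rw [intervalIntegral.integral_const, intervalIntegral.integral_mul_const, h1]
  simp [smul_eq_mul]

lemma piece (a : ℕ → ℝ) (k : ℕ) (t : ℝ) (h1 : (k:ℝ) ≤ t) (h2 : t ≤ (k:ℝ) + 1) :
    ∫ s in (k:ℝ)..t, interpSeq a s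
      = (t - k) * a k + (t - k)^2 / 2 * (a (k+1) - a k) := by
  rw [show (∫ s in (k:ℝ)..t, interpSeq a s)
      = ∫ s in (k:ℝ)..t, (a k + (s - k) * (a (k+1) - a k)) from ?_, affine_int]
  apply intervalIntegral.integral_congr_ae
  have hae : ∀ᵐ s : ℝ, s ≠ (k:ℝ) + 1 := by
    rw [ae_iff]
    simp [measure_singleton]
  filter_upwards [hae] with s hs hmem
  rw [Set.uIoc_of_le h1] at hmem
  have hfl : ⌊s⌋₊ = k := by
    rw [Nat.floor_eq_iff (le_of_lt (lt_of_le_of_lt (Nat.cast_nonneg k) hmem.1))]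
    refine ⟨le_of_lt hmem.1, lt_of_le_of_ne (le_trans hmem.2 h2) ?_⟩
    exact fun h => hs (by linarith)
  unfold interpSeq
  rw [hfl]

lemma int_to_nat (a : ℕ → ℝ) (M : ℝ) (hM : ∀ k, |a k| ≤ M) (n : ℕ) :
    ∫ s in (0:ℝ)..(n:ℝ), interpSeq a s = ∑ k ∈ Finset.range n, (a k + a (k+1)) / 2 := by
  induction n with
  | zero => simp
  | succ n ih =>
    have key := intervalIntegral.integral_add_adjacent_intervals
      (interp_intble a M hM 0 n (le_refl 0) (Nat.cast_nonneg n))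
      (interp_intble a M hM (n:ℝ) ((n:ℕ)+1 : ℕ) (Nat.cast_nonneg n) (Nat.cast_nonneg _))
    push_cast at key ⊢
    rw [← key, ih, Finset.sum_range_succ,
      piece a n ((n:ℝ)+1) (by linarith) (le_refl _)]
    ring

set_option maxHeartbeats 1000000 in
/-- For a bounded real sequence `a`, with `p_c(a)` the piecewise-linear
interpolation and `C` the Cesàro operators on sequences and functions,
`C(p_c(a))(t) − p_c(C(a))(t) → 0` as `t → ∞`. -/
theorem statement10 (a : ℕ → ℝ) (hbd : ∃ C : ℝ, ∀ k, |a k| ≤ C) :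
    Tendsto
      (fun t : ℝ =>
        (1 / t) * (∫ s in (0 : ℝ)..t, interpSeq a s) - interpSeq (cesaroSeq a) t)
      atTop (𝓝 0) := by
  obtain ⟨M, hM⟩ := hbd
  have hM0 : 0 ≤ M := le_trans (abs_nonneg _) (hM 0)
  apply squeeze_zero_norm' (a := fun t : ℝ => 6 * M / t)
  · filter_upwards [eventually_ge_atTop (1:ℝ)] with t ht
    set n := ⌊t⌋₊ with hn
    have hnt : (n:ℝ) ≤ t := Nat.floor_le (by linarith)
    have htn : t < (n:ℝ) + 1 := Nat.lt_floor_add_one t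
    have ht0 : (0:ℝ) < t := by linarith
    have hn1 : (0:ℝ) < (n:ℝ) + 1 := by positivity
    have hn2 : (0:ℝ) < (n:ℝ) + 2 := by positivity
    have hsplit := intervalIntegral.integral_add_adjacent_intervals
      (interp_intble a M hM 0 n (le_refl 0) (Nat.cast_nonneg n))
      (interp_intble a M hM (n:ℝ) t (Nat.cast_nonneg n) (by linarith))
    have hint : ∫ s in (0:ℝ)..t, interpSeq a s
        = (∑ k ∈ Finset.range n, (a k + a (k+1))/2)
          + ((t - n) * a n + (t - n)^2/2 * (a (n+1) - a n)) := by
      rw [← hsplit, int_to_nat a M hM, piece a n t hnt (le_of_lt htn)]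
    set S := ∑ k ∈ Finset.range (n+1), a k with hS
    have hsum : ∑ k ∈ Finset.range n, (a k + a (k+1))/2 = S - (a 0 + a n)/2 := by
      have h1 : ∑ k ∈ Finset.range (n+1), a k = (∑ k ∈ Finset.range n, a k) + a n :=
        Finset.sum_range_succ _ _
      have h2 : ∑ k ∈ Finset.range (n+1), a k = (∑ k ∈ Finset.range n, a (k+1)) + a 0 :=
        Finset.sum_range_succ' _ _
      calc ∑ k ∈ Finset.range n, (a k + a (k+1))/2
          = ((∑ k ∈ Finset.range n, a k) + ∑ k ∈ Finset.range n, a (k+1))/2 := by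
            rw [← Finset.sum_add_distrib, ← Finset.sum_div]
        _ = S - (a 0 + a n)/2 := by rw [hS]; linarith
    have hcf : interpSeq (cesaroSeq a) t
        = cesaroSeq a n + (t - (n:ℝ)) * (cesaroSeq a (n+1) - cesaroSeq a n) := by
      rw [hn]; rfl
    have hS' : ∑ k ∈ Finset.range (n+1+1), a k = S + a (n+1) := Finset.sum_range_succ _ _
    have hSb : |S| ≤ ((n:ℝ)+1) * M := by
      calc |S| ≤ ∑ k ∈ Finset.range (n+1), |a k| := Finset.abs_sum_le_sum_abs _ _
        _ ≤ ∑ _k ∈ Finset.range (n+1), M := Finset.sum_le_sum fun k _ => hM k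
        _ = ((n:ℝ)+1) * M := by
            rw [Finset.sum_const, Finset.card_range, nsmul_eq_mul]; push_cast; ring
    clear_value S n
    have hθ0 : 0 ≤ t - (n:ℝ) := by linarith
    have hθ1 : t - (n:ℝ) < 1 := by linarith
    have hdecomp :
        (1 / t) * (∫ s in (0:ℝ)..t, interpSeq a s) - interpSeq (cesaroSeq a) t
          = S * (((n:ℝ)+1) - t) / (t * ((n:ℝ)+1))
            + (-(a 0 + a n)/2 + (t - n) * a n + (t - n)^2/2 * (a (n+1) - a n)) / t
            + (-((t - (n:ℝ)) * ((((n:ℝ)+1) * a (n+1) - S) / (((n:ℝ)+1) * ((n:ℝ)+2))))) := by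
      rw [hint, hsum, hcf]
      unfold cesaroSeq
      rw [← hS, hS']
      push_cast
      field_simp
      ring
    rw [Real.norm_eq_abs, hdecomp]
    have hA : |S * (((n:ℝ)+1) - t) / (t * ((n:ℝ)+1))| ≤ M / t := by
      rw [abs_div, abs_of_pos (mul_pos ht0 hn1), abs_mul]
      have h1 : |((n:ℝ)+1) - t| ≤ 1 := by rw [abs_of_nonneg (by linarith)]; linarith
      calc |S| * |((n:ℝ)+1) - t| / (t * ((n:ℝ)+1))
          ≤ (((n:ℝ)+1) * M) * 1 / (t * ((n:ℝ)+1)) := by gcongr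
        _ = M / t := by field_simp
    have hB : |(-(a 0 + a n)/2 + (t - n) * a n + (t - n)^2/2 * (a (n+1) - a n)) / t|
        ≤ 3 * M / t := by
      rw [abs_div, abs_of_pos ht0]
      gcongr
      have b0 := hM 0
      have bn := hM n
      have bn1 := hM (n+1)
      have e0 : |(-(a 0 + a n)/2)| ≤ M := by
        rw [abs_div, abs_neg]
        have := abs_add_le (a 0) (a n)
        rw [show |(2:ℝ)| = 2 by norm_num]
        linarith
      have hθa : |t - (n:ℝ)| ≤ 1 := by rw [abs_of_nonneg hθ0]; linarith
      have e1 : |(t - (n:ℝ)) * a n| ≤ M := by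
        rw [abs_mul]
        calc |t - (n:ℝ)| * |a n| ≤ 1 * M := mul_le_mul hθa (hM n) (abs_nonneg _) one_pos.le
          _ = M := one_mul M
      have e2 : |(t - (n:ℝ))^2/2 * (a (n+1) - a n)| ≤ M := by
        rw [abs_mul]
        have h3 : |(t - (n:ℝ))^2/2| ≤ 1/2 := by
          rw [abs_div, abs_of_nonneg (sq_nonneg _), show |(2:ℝ)| = 2 by norm_num]
          nlinarith
        have h4 : |a (n+1) - a n| ≤ 2*M := by
          have := abs_sub (a (n+1)) (a n); linarith [hM (n+1), hM n]
        calc |(t - (n:ℝ))^2/2| * |a (n+1) - a n| ≤ (1/2) * (2*M) :=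
            mul_le_mul h3 h4 (abs_nonneg _) (by norm_num)
          _ = M := by ring
      calc |(-(a 0 + a n)/2 + (t - n) * a n + (t - n)^2/2 * (a (n+1) - a n))|
          ≤ |(-(a 0 + a n)/2 + (t - n) * a n)| + |(t - n)^2/2 * (a (n+1) - a n)| :=
            abs_add_le _ _
        _ ≤ |(-(a 0 + a n)/2)| + |(t - n) * a n| + |(t - n)^2/2 * (a (n+1) - a n)| := by
            have := abs_add_le (-(a 0 + a n)/2) ((t - (n:ℝ)) * a n)
            linarith
        _ ≤ 3 * M := by linarith
    have hE : |(-((t - (n:ℝ)) * ((((n:ℝ)+1) * a (n+1) - S) / (((n:ℝ)+1) * ((n:ℝ)+2)))))|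
        ≤ 2 * M / t := by
      rw [abs_neg, abs_mul, abs_div, abs_of_pos (mul_pos hn1 hn2)]
      have hnum : |((n:ℝ)+1) * a (n+1) - S| ≤ 2 * (((n:ℝ)+1) * M) := by
        have h := abs_sub (((n:ℝ)+1) * a (n+1)) S
        have h2 : |((n:ℝ)+1) * a (n+1)| ≤ ((n:ℝ)+1) * M := by
          rw [abs_mul, abs_of_pos hn1]
          exact mul_le_mul_of_nonneg_left (hM (n+1)) (le_of_lt hn1)
        linarith
      have hθa : |t - (n:ℝ)| ≤ 1 := by rw [abs_of_nonneg hθ0]; linarith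
      calc |t - (n:ℝ)| * (|((n:ℝ)+1) * a (n+1) - S| / (((n:ℝ)+1) * ((n:ℝ)+2)))
          ≤ 1 * ((2 * (((n:ℝ)+1) * M)) / (((n:ℝ)+1) * ((n:ℝ)+2))) := by
            gcongr
        _ = 2 * M / ((n:ℝ)+2) := by field_simp
        _ ≤ 2 * M / t := by
            gcongr
            linarith
    calc |S * (((n:ℝ)+1) - t) / (t * ((n:ℝ)+1))
          + (-(a 0 + a n)/2 + (t - n) * a n + (t - n)^2/2 * (a (n+1) - a n)) / t
          + (-((t - (n:ℝ)) * ((((n:ℝ)+1) * a (n+1) - S) / (((n:ℝ)+1) * ((n:ℝ)+2)))))|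
        ≤ |S * (((n:ℝ)+1) - t) / (t * ((n:ℝ)+1))
            + (-(a 0 + a n)/2 + (t - n) * a n + (t - n)^2/2 * (a (n+1) - a n)) / t|
          + |(-((t - (n:ℝ)) * ((((n:ℝ)+1) * a (n+1) - S) / (((n:ℝ)+1) * ((n:ℝ)+2)))))| :=
          abs_add_le _ _
      _ ≤ |S * (((n:ℝ)+1) - t) / (t * ((n:ℝ)+1))|
          + |(-(a 0 + a n)/2 + (t - n) * a n + (t - n)^2/2 * (a (n+1) - a n)) / t|
          + |(-((t - (n:ℝ)) * ((((n:ℝ)+1) * a (n+1) - S) / (((n:ℝ)+1) * ((n:ℝ)+2)))))| := by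
          have := abs_add_le (S * (((n:ℝ)+1) - t) / (t * ((n:ℝ)+1)))
            ((-(a 0 + a n)/2 + (t - n) * a n + (t - n)^2/2 * (a (n+1) - a n)) / t)
          linarith
      _ ≤ M / t + 3 * M / t + 2 * M / t := by linarith
      _ = 6 * M / t := by ring
  · exact tendsto_const_nhds.div_atTop tendsto_id
end

section
/- For every bounded measurable function f : [0,∞) → ℝ, lim_{n→∞} [ (1/(n+1)) Σ_{k=0}^n ∫_k^{k+1} f(s) ds − ∫_n^{n+1} ( (1/t) ∫_0^t f(s) ds ) dt ] = 0. -/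
open Filter Finset
open scoped Topology

/-- For every bounded measurable `f : [0,∞) → ℝ`,
`(1/(n+1)) ∑_{k=0}^n ∫_k^{k+1} f − ∫_n^{n+1} ((1/t) ∫_0^t f) dt → 0` as `n → ∞`,
i.e. the sequence `C(r(E f)) − r(E(C f))` tends to `0`. -/
theorem statement11 (f : ℝ → ℝ) (hmeas : Measurable f)
    (hbd : ∃ C : ℝ, ∀ t : ℝ, 0 ≤ t → |f t| ≤ C) :
    Tendsto
      (fun n : ℕ =>
        (1 / ((n : ℝ) + 1)) *
            (∑ k ∈ Finset.range (n + 1), ∫ s in (k : ℝ)..((k : ℝ) + 1), f s) -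
          ∫ t in (n : ℝ)..((n : ℝ) + 1), (1 / t) * ∫ s in (0 : ℝ)..t, f s)
      atTop (𝓝 0) := by
  obtain ⟨C, hC⟩ := hbd
  have hC0 : 0 ≤ C := (abs_nonneg (f 0)).trans (hC 0 le_rfl)
  -- interval integrability of f on nonnegative intervals
  have hint : ∀ a b : ℝ, 0 ≤ a → 0 ≤ b → IntervalIntegrable f MeasureTheory.volume a b := by
    intro a b ha hb
    rw [intervalIntegrable_iff]
    refine ⟨hmeas.aestronglyMeasurable.restrict, ?_⟩
    haveI : MeasureTheory.IsFiniteMeasure (MeasureTheory.volume.restrict (Set.uIoc a b)) := by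
      constructor
      rw [MeasureTheory.Measure.restrict_apply_univ]
      simp only [Set.uIoc, Real.volume_Ioc]
      exact ENNReal.ofReal_lt_top
    apply MeasureTheory.HasFiniteIntegral.of_bounded (C := C)
    refine (MeasureTheory.ae_restrict_iff' measurableSet_uIoc).mpr (Filter.Eventually.of_forall ?_)
    intro x hx
    have hx0 : 0 ≤ x := le_of_lt (lt_of_le_of_lt (le_min ha hb) hx.1)
    simpa [Real.norm_eq_abs] using hC x hx0
  set F : ℝ → ℝ := fun t => ∫ s in (0:ℝ)..t, f s with hF
  -- F is bounded by C * t
  have hFbd : ∀ t : ℝ, 0 ≤ t → |F t| ≤ C * t := by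
    intro t ht
    have h := intervalIntegral.norm_integral_le_of_norm_le_const
      (a := 0) (b := t) (C := C) (f := f) ?_
    · simpa [Real.norm_eq_abs, abs_of_nonneg ht] using h
    · intro x hx
      have hx0 : 0 ≤ x := le_of_lt (by simpa [Set.uIoc, ht] using hx.1)
      simpa [Real.norm_eq_abs] using hC x hx0
  -- the sum telescopes
  have hsum : ∀ n : ℕ, (∑ k ∈ Finset.range (n + 1), ∫ s in (k : ℝ)..((k : ℝ) + 1), f s)
      = F ((n : ℝ) + 1) := by
    intro n
    have h := intervalIntegral.sum_integral_adjacent_intervals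
      (μ := MeasureTheory.volume) (f := f) (a := fun k : ℕ => (k : ℝ)) (n := n + 1)
      (fun k _ => by
        have : ((k : ℝ) + 1) = ((k + 1 : ℕ) : ℝ) := by push_cast; ring
        rw [this] at *
        exact hint _ _ (by positivity) (by positivity))
    have e1 : ∀ k : ℕ, ((k + 1 : ℕ) : ℝ) = (k : ℝ) + 1 := by intro k; push_cast; ring
    simpa [e1] using h
  -- main bound
  have hbound : ∀ n : ℕ, 1 ≤ n →
      ‖(1 / ((n : ℝ) + 1)) *
            (∑ k ∈ Finset.range (n + 1), ∫ s in (k : ℝ)..((k : ℝ) + 1), f s) -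
          ∫ t in (n : ℝ)..((n : ℝ) + 1), (1 / t) * F t‖ ≤ 2 * C / ((n : ℝ) + 1) := by
    intro n hn
    have hn1 : (1 : ℝ) ≤ (n : ℝ) := by exact_mod_cast hn
    have hnpos : (0 : ℝ) < (n : ℝ) + 1 := by linarith
    set c : ℝ := (1 / ((n : ℝ) + 1)) * F ((n : ℝ) + 1) with hc
    -- integrability of the integrand
    have hFcont : ContinuousOn F (Set.uIcc (0:ℝ) ((n:ℝ)+1)) := by
      apply intervalIntegral.continuousOn_primitive_interval
      rw [Set.uIcc_of_le (by linarith : (0:ℝ) ≤ (n:ℝ)+1),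
        ← intervalIntegrable_iff_integrableOn_Icc_of_le (by linarith)]
      exact hint 0 ((n:ℝ)+1) le_rfl (by linarith)
    have hsub : Set.uIcc ((n:ℝ)) ((n:ℝ)+1) ⊆ Set.uIcc (0:ℝ) ((n:ℝ)+1) := by
      rw [Set.uIcc_of_le (by linarith : (n:ℝ) ≤ (n:ℝ)+1),
        Set.uIcc_of_le (by linarith : (0:ℝ) ≤ (n:ℝ)+1)]
      exact Set.Icc_subset_Icc (by linarith) le_rfl
    have hgcont : ContinuousOn (fun t : ℝ => (1 / t) * F t) (Set.uIcc ((n:ℝ)) ((n:ℝ)+1)) := by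
      apply ContinuousOn.mul
      · apply ContinuousOn.div continuousOn_const continuousOn_id
        intro x hx
        rw [Set.uIcc_of_le (by linarith : (n:ℝ) ≤ (n:ℝ)+1)] at hx
        have : (1:ℝ) ≤ x := le_trans hn1 hx.1
        intro h; simp only [id] at h; rw [h] at this; linarith
      · exact hFcont.mono hsub
    have hgint : IntervalIntegrable (fun t : ℝ => (1 / t) * F t) MeasureTheory.volume
        ((n:ℝ)) ((n:ℝ)+1) := hgcont.intervalIntegrable
    -- pointwise bound on the difference
    have hptwise : ∀ t ∈ Set.uIoc ((n:ℝ)) ((n:ℝ)+1),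
        ‖c - (1 / t) * F t‖ ≤ 2 * C / ((n : ℝ) + 1) := by
      intro t ht
      rw [Set.uIoc_of_le (by linarith : (n:ℝ) ≤ (n:ℝ)+1)] at ht
      have ht1 : (1:ℝ) ≤ t := le_trans hn1 (le_of_lt ht.1)
      have htpos : (0:ℝ) < t := by linarith
      have ht2 : t ≤ (n:ℝ) + 1 := ht.2
      have hd1 : |F ((n:ℝ)+1) - F t| ≤ C := by
        have heq : F ((n:ℝ)+1) - F t = ∫ s in t..((n:ℝ)+1), f s := by
          exact intervalIntegral.integral_interval_sub_left
            (hint 0 ((n:ℝ)+1) le_rfl (by linarith)) (hint 0 t le_rfl (by linarith))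
        rw [heq]
        have h := intervalIntegral.norm_integral_le_of_norm_le_const
          (a := t) (b := (n:ℝ)+1) (C := C) (f := f) ?_
        · calc |∫ s in t..((n:ℝ)+1), f s| ≤ C * |(n:ℝ)+1 - t| := h
            _ ≤ C * 1 := by
                apply mul_le_mul_of_nonneg_left _ hC0
                rw [abs_of_nonneg (by linarith [ht.2])]; linarith [ht.1]
            _ = C := mul_one C
        · intro x hx
          have hx0 : 0 ≤ x := by
            have := hx.1
            have hmin : (0:ℝ) ≤ min t ((n:ℝ)+1) := le_min (by linarith) (by linarith)
            exact le_of_lt (lt_of_le_of_lt hmin this)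
          simpa [Real.norm_eq_abs] using hC x hx0
      have hd2 : |F t| ≤ C * t := hFbd t (le_of_lt htpos)
      have key : c - (1 / t) * F t
          = (F ((n:ℝ)+1) - F t) / ((n:ℝ)+1) + F t * ((t - ((n:ℝ)+1)) / (t * ((n:ℝ)+1))) := by
        rw [hc]; field_simp; ring
      rw [key, Real.norm_eq_abs]
      have h1 : |(F ((n:ℝ)+1) - F t) / ((n:ℝ)+1)| ≤ C / ((n:ℝ)+1) := by
        rw [abs_div, abs_of_pos hnpos]
        gcongr
      have h2 : |F t * ((t - ((n:ℝ)+1)) / (t * ((n:ℝ)+1)))| ≤ C / ((n:ℝ)+1) := by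
        rw [abs_mul, abs_div, abs_of_pos (by positivity : (0:ℝ) < t * ((n:ℝ)+1))]
        have habs : |t - ((n:ℝ)+1)| ≤ 1 := by
          rw [abs_le]; constructor <;> linarith [ht.1]
        calc |F t| * (|t - ((n:ℝ)+1)| / (t * ((n:ℝ)+1)))
            ≤ (C * t) * (1 / (t * ((n:ℝ)+1))) := by
              have h0 : (0:ℝ) < t * ((n:ℝ)+1) := by positivity
              gcongr
          _ = C / ((n:ℝ)+1) := by field_simp
      calc |(F ((n:ℝ)+1) - F t) / ((n:ℝ)+1) + F t * ((t - ((n:ℝ)+1)) / (t * ((n:ℝ)+1)))|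
          ≤ |(F ((n:ℝ)+1) - F t) / ((n:ℝ)+1)| + |F t * ((t - ((n:ℝ)+1)) / (t * ((n:ℝ)+1)))| :=
            abs_add_le _ _
        _ ≤ C / ((n:ℝ)+1) + C / ((n:ℝ)+1) := add_le_add h1 h2
        _ = 2 * C / ((n:ℝ)+1) := by ring
    -- rewrite the expression as a single integral
    have hrw : (1 / ((n : ℝ) + 1)) *
            (∑ k ∈ Finset.range (n + 1), ∫ s in (k : ℝ)..((k : ℝ) + 1), f s) -
          (∫ t in (n : ℝ)..((n : ℝ) + 1), (1 / t) * F t)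
        = ∫ t in (n : ℝ)..((n : ℝ) + 1), (c - (1 / t) * F t) := by
      rw [intervalIntegral.integral_sub intervalIntegrable_const hgint,
        intervalIntegral.integral_const, hsum n, hc]
      simp
    rw [hrw]
    have h := intervalIntegral.norm_integral_le_of_norm_le_const
      (a := (n:ℝ)) (b := (n:ℝ)+1) (C := 2 * C / ((n:ℝ)+1))
      (f := fun t => c - (1 / t) * F t) hptwise
    simpa using h
  -- conclude by squeezing
  have htend : Tendsto (fun n : ℕ => 2 * C / ((n : ℝ) + 1)) atTop (𝓝 0) := by
    apply Tendsto.div_atTop tendsto_const_nhds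
    exact tendsto_atTop_add_const_right atTop 1 tendsto_natCast_atTop_atTop
  apply squeeze_zero_norm' _ htend
  filter_upwards [eventually_ge_atTop 1] with n hn
  exact hbound n hn
end

section
/- Let g : [1,∞) → ℝ be nonnegative, nonincreasing, and locally integrable with sup_{t≥1} (1/log(1+t)) ∫_1^t g(s) ds < ∞, and let f_g(t) = (1/log(1+e^t)) ∫_1^{e^t} g(s) ds for t ≥ 0. Define K(s) = max_{t∈[s,s+1]} |f_g(t) − f_g(s)|, a bounded continuous function on [0,∞). Then θ(K) = 0 for every state θ on C_b([0,∞)) satisfying θ(f(·+1)) = θ(f) for all f ∈ C_b([0,∞)). -/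
open Filter
open scoped Topology

/-- `C_b([0,∞))`: the bounded continuous real-valued functions on `[0,∞)`. -/
noncomputable abbrev Cb : Type := BoundedContinuousFunction (Set.Ici (0 : ℝ)) ℝ

/-- The translation operator `(T_a f)(t) = f(t+a)` on `C_b([0,∞))`, for `a ≥ 0`. -/
noncomputable def translateCb (a : ℝ) (ha : 0 ≤ a) (f : Cb) : Cb :=
  f.compContinuous ⟨fun t => ⟨t.1 + a, add_nonneg t.2 ha⟩, by
    exact Continuous.subtype_mk (continuous_subtype_val.add continuous_const) _⟩


noncomputable def Lf (t : ℝ) : ℝ := Real.log (1 + Real.exp t)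

lemma Lf_pos (t : ℝ) : 0 < Lf t :=
  Real.log_pos (by linarith [Real.exp_pos t])

lemma Lf_mono {s t : ℝ} (h : s ≤ t) : Lf s ≤ Lf t :=
  Real.log_le_log (by positivity) (by linarith [Real.exp_le_exp.2 h])

lemma le_Lf (t : ℝ) : t ≤ Lf t := by
  have := Real.log_le_log (Real.exp_pos t)
    (by linarith [Real.exp_pos t] : Real.exp t ≤ 1 + Real.exp t)
  simpa [Real.log_exp, Lf] using this

lemma Lf_step (t : ℝ) : Lf (t + 1) ≤ Lf t + 1 := by
  have h1 : (1:ℝ) + Real.exp (t+1) ≤ Real.exp 1 * (1 + Real.exp t) := by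
    rw [Real.exp_add]
    nlinarith [Real.exp_pos t, Real.one_le_exp (zero_le_one : (0:ℝ) ≤ 1)]
  have h2 : Lf (t+1) ≤ Real.log (Real.exp 1 * (1 + Real.exp t)) :=
    Real.log_le_log (by positivity) h1
  rw [Real.log_mul (by positivity) (by positivity), Real.log_exp] at h2
  simp only [Lf] at h2 ⊢
  linarith

lemma Lf_add_nat (t : ℝ) (n : ℕ) : Lf (t + n) ≤ Lf t + n := by
  induction n with
  | zero => simp
  | succ n ih =>
      have h := Lf_step (t + n)
      have : Lf (t + (n+1:ℕ)) = Lf (t + n + 1) := by push_cast; ring_nf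
      rw [this]; push_cast; linarith

noncomputable def Af (g : ℝ → ℝ) (t : ℝ) : ℝ := ∫ s in (1:ℝ)..(Real.exp t), g s

lemma one_le_exp_of {t : ℝ} (ht : 0 ≤ t) : 1 ≤ Real.exp t := by
  simpa using Real.exp_le_exp.2 ht

lemma Af_nonneg {g : ℝ → ℝ} (hg0 : ∀ s : ℝ, 1 ≤ s → 0 ≤ g s) {t : ℝ} (ht : 0 ≤ t) :
    0 ≤ Af g t :=
  intervalIntegral.integral_nonneg (one_le_exp_of ht) (fun x hx => hg0 x hx.1)

lemma Af_mono {g : ℝ → ℝ} (hg0 : ∀ s : ℝ, 1 ≤ s → 0 ≤ g s)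
    (hgint : ∀ t : ℝ, 1 ≤ t → IntervalIntegrable g MeasureTheory.volume 1 t)
    {s t : ℝ} (hs : 0 ≤ s) (hst : s ≤ t) : Af g s ≤ Af g t := by
  have h1 : 1 ≤ Real.exp s := one_le_exp_of hs
  have h2 : Real.exp s ≤ Real.exp t := Real.exp_le_exp.2 hst
  have hint2 : IntervalIntegrable g MeasureTheory.volume (Real.exp s) (Real.exp t) := by
    apply (hgint (Real.exp t) (le_trans h1 h2)).mono_set
    rw [Set.uIcc_of_le (le_trans h1 h2), Set.uIcc_of_le h2]
    exact Set.Icc_subset_Icc h1 le_rfl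
  have hadd := intervalIntegral.integral_add_adjacent_intervals
    (hgint (Real.exp s) h1) hint2
  have hpos : 0 ≤ ∫ x in (Real.exp s)..(Real.exp t), g x :=
    intervalIntegral.integral_nonneg h2 (fun x hx => hg0 x (le_trans h1 hx.1))
  simp only [Af]
  linarith [hadd, hpos]


lemma key_bound {g : ℝ → ℝ}
    (hg0 : ∀ s : ℝ, 1 ≤ s → 0 ≤ g s)
    (hgint : ∀ t : ℝ, 1 ≤ t → IntervalIntegrable g MeasureTheory.volume 1 t)
    {B : ℝ}
    (hAB : ∀ t : ℝ, 0 ≤ t → Af g t ≤ B * Lf t)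
    (Lf_pos : ∀ t : ℝ, 0 < Lf t)
    (Lf_mono : ∀ {s t : ℝ}, s ≤ t → Lf s ≤ Lf t)
    (Lf_step : ∀ t : ℝ, Lf (t + 1) ≤ Lf t + 1)
    (Af_nonneg : ∀ {t : ℝ}, 0 ≤ t → 0 ≤ Af g t)
    (Af_mono : ∀ {s t : ℝ}, 0 ≤ s → s ≤ t → Af g s ≤ Af g t)
    {s t : ℝ} (hs : 0 ≤ s) (h1 : s ≤ t) (h2 : t ≤ s + 1) :
    |Af g t / Lf t - Af g s / Lf s| ≤ (Af g (s+1) - Af g s + B) / Lf s := by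
  have hls := Lf_pos s
  have hlt := Lf_pos t
  have hLst : Lf s ≤ Lf t := Lf_mono h1
  have hLt1 : Lf t ≤ Lf s + 1 := le_trans (Lf_mono h2) (Lf_step s)
  have hAst : Af g s ≤ Af g t := Af_mono hs h1
  have hAt1 : Af g t ≤ Af g (s+1) := Af_mono (le_trans hs h1) h2
  have hAs0 : 0 ≤ Af g s := Af_nonneg hs
  have hAsB : Af g s ≤ B * Lf s := hAB s hs
  have hB0 : 0 ≤ B := by
    have := le_trans hAs0 hAsB
    nlinarith
  have key : Af g t / Lf t - Af g s / Lf s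
      = (Af g t - Af g s) / Lf t - Af g s * (Lf t - Lf s) / (Lf s * Lf t) := by
    field_simp
    ring
  have t1 : (Af g t - Af g s) / Lf t ≤ (Af g (s+1) - Af g s) / Lf s :=
    div_le_div₀ (by linarith) (by linarith) hls hLst
  have t2 : Af g s * (Lf t - Lf s) / (Lf s * Lf t) ≤ B / Lf s := by
    have step1 : Af g s * (Lf t - Lf s) ≤ (B * Lf s) * 1 := by nlinarith
    have step2 : Af g s * (Lf t - Lf s) / (Lf s * Lf t) ≤ (B * Lf s) / (Lf s * Lf t) := by
      apply div_le_div_of_nonneg_right ?_ (by positivity)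
      · linarith
    have step3 : (B * Lf s) / (Lf s * Lf t) = B / Lf t := by
      field_simp
    have step4 : B / Lf t ≤ B / Lf s := by
      apply div_le_div_of_nonneg_left hB0 hls hLst
    calc Af g s * (Lf t - Lf s) / (Lf s * Lf t) ≤ (B * Lf s) / (Lf s * Lf t) := step2
      _ = B / Lf t := step3
      _ ≤ B / Lf s := step4
  have u0 : 0 ≤ (Af g t - Af g s) / Lf t := div_nonneg (by linarith) hlt.le
  have v0 : 0 ≤ Af g s * (Lf t - Lf s) / (Lf s * Lf t) :=
    div_nonneg (mul_nonneg hAs0 (by linarith)) (by positivity)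
  have hRHS : (Af g (s+1) - Af g s + B) / Lf s
      = (Af g (s+1) - Af g s) / Lf s + B / Lf s := by rw [add_div]
  have w0 : 0 ≤ (Af g (s+1) - Af g s) / Lf s := div_nonneg (by linarith) hls.le
  have x0 : 0 ≤ B / Lf s := div_nonneg hB0 hls.le
  rw [key, abs_le]
  constructor <;> linarith
lemma translateCb_apply (f : Cb) (x : Set.Ici (0:ℝ)) :
    (translateCb 1 zero_le_one f) x = f ⟨x.1 + 1, Set.mem_Ici.2 (add_nonneg x.2 zero_le_one)⟩ := rfl

lemma translateCb_iterate_apply (j : ℕ) (f : Cb) (x : Set.Ici (0:ℝ)) :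
    ((translateCb 1 zero_le_one)^[j] f) x
      = f ⟨x.1 + j, Set.mem_Ici.2 (add_nonneg x.2 (Nat.cast_nonneg j))⟩ := by
  induction j generalizing f with
  | zero => congr 1; exact Subtype.ext (by simp)
  | succ j ih =>
      rw [Function.iterate_succ_apply, ih (translateCb 1 zero_le_one f),
        translateCb_apply]
      congr 1
      exact Subtype.ext (by push_cast; ring)

/-- Let `g : [1,∞) → ℝ` be nonnegative, nonincreasing, locally
integrable with bounded logarithmic averages, and let
`f_g(t) = (1/log(1+e^t)) ∫_1^{e^t} g`.  With `K(s) = max_{t∈[s,s+1]} |f_g(t) − f_g(s)|`,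
a bounded continuous function on `[0,∞)`, one has `θ(K) = 0` for every state `θ` on
`C_b([0,∞))` invariant under translation by `1`. -/
theorem statement12 (g : ℝ → ℝ)
    (hg0 : ∀ s : ℝ, 1 ≤ s → 0 ≤ g s)
    (hganti : AntitoneOn g (Set.Ici (1 : ℝ)))
    (hgint : ∀ t : ℝ, 1 ≤ t → IntervalIntegrable g MeasureTheory.volume 1 t)
    (hgsup : ∃ B : ℝ, ∀ t : ℝ, 1 ≤ t →
      (1 / Real.log (1 + t)) * ∫ s in (1 : ℝ)..t, g s ≤ B)
    (fg : ℝ → ℝ)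
    (hfg : ∀ t : ℝ, fg t =
      (1 / Real.log (1 + Real.exp t)) * ∫ s in (1 : ℝ)..(Real.exp t), g s)
    (K : Cb)
    (hK : ∀ s : Set.Ici (0 : ℝ),
      K s = sSup ((fun t => |fg t - fg s.1|) '' Set.Icc s.1 (s.1 + 1)))
    (θ : Cb →ₗ[ℝ] ℝ)
    (hθpos : ∀ f : Cb, (∀ t, 0 ≤ f t) → 0 ≤ θ f)
    (hθone : θ 1 = 1)
    (hθtrans : ∀ f : Cb, θ (translateCb 1 zero_le_one f) = θ f) :
    θ K = 0 := by
  obtain ⟨B, hB⟩ := hgsup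
  have hB0 : 0 ≤ B := by
    have h := hB 1 le_rfl
    simpa using h
  have hAB : ∀ t : ℝ, 0 ≤ t → Af g t ≤ B * Lf t := by
    intro t ht
    have h := hB (Real.exp t) (one_le_exp_of ht)
    have hl := Lf_pos t
    have h' : Af g t / Lf t ≤ B := by
      simpa [Af, Lf, one_div, ← div_eq_inv_mul] using h
    exact (div_le_iff₀ hl).1 h'
  have hfg' : ∀ t : ℝ, fg t = Af g t / Lf t := by
    intro t
    rw [hfg t]
    simp only [Af, Lf]
    rw [one_div, ← div_eq_inv_mul]
  -- pointwise bound for |fg t - fg s|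
  have hmain : ∀ s t : ℝ, 0 ≤ s → s ≤ t → t ≤ s + 1 →
      |fg t - fg s| ≤ (Af g (s+1) - Af g s + B) / Lf s := by
    intro s t hs h1 h2
    rw [hfg' t, hfg' s]
    exact key_bound hg0 hgint hAB Lf_pos (fun h => Lf_mono h) Lf_step
      (fun ht => Af_nonneg hg0 ht) (fun hs' h => Af_mono hg0 hgint hs' h) hs h1 h2
  have hKb : ∀ s : Set.Ici (0:ℝ), K s ≤ (Af g (s.1+1) - Af g s.1 + B) / Lf s.1 := by
    intro s
    rw [hK s]
    apply csSup_le
    · exact ⟨_, Set.mem_image_of_mem _ (Set.mem_Icc.2 ⟨le_rfl, by linarith⟩)⟩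
    · rintro b ⟨t, ht, rfl⟩
      exact hmain s.1 t s.2 ht.1 ht.2
  have hKnn : ∀ s : Set.Ici (0:ℝ), 0 ≤ K s := by
    intro s
    rw [hK s]
    have hbdd : BddAbove ((fun t => |fg t - fg s.1|) '' Set.Icc s.1 (s.1+1)) := by
      refine ⟨(Af g (s.1+1) - Af g s.1 + B) / Lf s.1, ?_⟩
      rintro b ⟨t, ht, rfl⟩
      exact hmain s.1 t s.2 ht.1 ht.2
    have h0mem : (0:ℝ) ∈ (fun t => |fg t - fg s.1|) '' Set.Icc s.1 (s.1+1) :=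
      ⟨s.1, Set.mem_Icc.2 ⟨le_rfl, by linarith⟩, by simp⟩
    exact le_csSup hbdd h0mem
  have hθiter : ∀ j : ℕ, θ ((translateCb 1 zero_le_one)^[j] K) = θ K := by
    intro j
    induction j with
    | zero => rfl
    | succ j ih => rw [Function.iterate_succ_apply', hθtrans, ih]
  -- the key estimate: θ K ≤ 3B/n for all n ≥ 1
  have hstep : ∀ n : ℕ, 1 ≤ n → θ K ≤ 3 * B / n := by
    intro n hn
    have hnpos : (0:ℝ) < n := by exact_mod_cast hn
    set F : Cb := ∑ k ∈ Finset.range n, (translateCb 1 zero_le_one)^[n+k] K with hF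
    have hθF : θ F = n * θ K := by
      rw [hF, map_sum]
      rw [Finset.sum_congr rfl (fun k _ => hθiter (n+k))]
      simp [Finset.sum_const, Finset.card_range, nsmul_eq_mul]
    have hFle : ∀ x : Set.Ici (0:ℝ), F x ≤ 3 * B := by
      intro x
      set a : ℝ := x.1 + n with ha
      have hx0 : (0:ℝ) ≤ x.1 := x.2
      have ha0 : 0 ≤ a := by positivity
      have hna : (n:ℝ) ≤ a := by rw [ha]; linarith
      have hFx : F x = ∑ k ∈ Finset.range n,
          K ⟨x.1 + (n+k:ℕ), Set.mem_Ici.2 (add_nonneg x.2 (Nat.cast_nonneg _))⟩ := by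
        rw [hF, BoundedContinuousFunction.coe_sum, Finset.sum_apply]
        exact Finset.sum_congr rfl (fun k _ => translateCb_iterate_apply (n+k) K x)
      have hterm : ∀ k ∈ Finset.range n,
          K ⟨x.1 + (n+k:ℕ), Set.mem_Ici.2 (add_nonneg x.2 (Nat.cast_nonneg _))⟩
            ≤ (Af g (a+k+1) - Af g (a+k) + B) / Lf a := by
        intro k _
        have e0 : (x.1 + (n+k:ℕ) : ℝ) = a + k := by push_cast; ring
        have hak : (0:ℝ) ≤ a + k := by positivity
        have hsub : (⟨x.1 + (n+k:ℕ), Set.mem_Ici.2 (add_nonneg x.2 (Nat.cast_nonneg _))⟩ : Set.Ici (0:ℝ))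
            = ⟨a + k, hak⟩ := Subtype.ext e0
        rw [hsub]
        have h1 := hKb ⟨a + k, hak⟩
        simp only at h1
        refine le_trans h1 ?_
        have hnum : 0 ≤ Af g (a+k+1) - Af g (a+k) + B := by
          have := Af_mono hg0 hgint (by positivity : (0:ℝ) ≤ a + k)
            (by linarith : a + k ≤ a + k + 1)
          linarith
        have hden : Lf a ≤ Lf (a+k) := Lf_mono (le_add_of_nonneg_right (Nat.cast_nonneg k))
        exact div_le_div_of_nonneg_left hnum (Lf_pos a) hden
      have hsum : ∑ k ∈ Finset.range n, ((Af g (a+k+1) - Af g (a+k) + B) / Lf a)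
          ≤ 3 * B := by
        have htel : ∑ k ∈ Finset.range n, (Af g (a+k+1) - Af g (a+k))
            = Af g (a+n) - Af g a := by
          have h := Finset.sum_range_sub (fun k : ℕ => Af g (a + k)) n
          calc ∑ k ∈ Finset.range n, (Af g (a+k+1) - Af g (a+k))
              = ∑ k ∈ Finset.range n, (Af g (a+((k:ℕ)+1:ℕ)) - Af g (a+k)) :=
                Finset.sum_congr rfl (fun k _ => by push_cast; ring_nf)
            _ = Af g (a+(n:ℕ)) - Af g (a+((0:ℕ):ℝ)) := h
            _ = Af g (a+n) - Af g a := by norm_num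
        rw [← Finset.sum_div]
        rw [Finset.sum_add_distrib, htel, Finset.sum_const, Finset.card_range,
          nsmul_eq_mul]
        rw [div_le_iff₀ (Lf_pos a)]
        have e1 : Af g (a+n) ≤ B * Lf (a+n) := hAB _ (by positivity)
        have e2 : Lf (a+n) ≤ Lf a + n := Lf_add_nat a n
        have e3 : (n:ℝ) ≤ Lf a := le_trans hna (le_Lf a)
        have e4 : 0 ≤ Af g a := Af_nonneg hg0 ha0
        have e5 : B * (n:ℝ) ≤ B * Lf a := mul_le_mul_of_nonneg_left e3 hB0
        have e6 : B * Lf (a+n) ≤ B * (Lf a + n) := mul_le_mul_of_nonneg_left e2 hB0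
        nlinarith
      calc F x = _ := hFx
        _ ≤ ∑ k ∈ Finset.range n, ((Af g (a+k+1) - Af g (a+k) + B) / Lf a) :=
            Finset.sum_le_sum hterm
        _ ≤ 3 * B := hsum
    have hθFle : θ F ≤ 3 * B := by
      have hnn : ∀ x, 0 ≤ ((3*B) • (1:Cb) - F) x := by
        intro x
        have := hFle x
        simp only [BoundedContinuousFunction.coe_sub, BoundedContinuousFunction.coe_smul,
          BoundedContinuousFunction.coe_one, Pi.sub_apply, Pi.smul_apply, Pi.one_apply,
          smul_eq_mul, mul_one]
        linarith
      have h1 := hθpos _ hnn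
      rw [map_sub, map_smul, hθone, smul_eq_mul, mul_one] at h1
      linarith
    rw [hθF] at hθFle
    rw [le_div_iff₀ hnpos]
    linarith [hθFle]
  -- conclude
  have h0 : 0 ≤ θ K := hθpos K hKnn
  rcases eq_or_lt_of_le h0 with h | h
  · exact h.symm
  · exfalso
    obtain ⟨n, hn⟩ := exists_nat_gt (3 * B / θ K)
    have hdiv0 : 0 ≤ 3 * B / θ K := div_nonneg (by linarith) h0
    have hn1 : 1 ≤ n := by
      by_contra hc
      push_neg at hc
      interval_cases n
      simp at hn
      linarith
    have := hstep n hn1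
    have hnpos : (0:ℝ) < n := by exact_mod_cast hn1
    rw [le_div_iff₀ hnpos] at this
    rw [div_lt_iff₀ h] at hn
    nlinarith
end

section
/- Let g : [1,∞) → ℝ be nonnegative, nonincreasing, and locally integrable with sup_{t≥1} (1/log(1+t)) ∫_1^t g(s) ds < ∞, and let f_g(t) = (1/log(1+e^t)) ∫_1^{e^t} g(s) ds for t ≥ 0. Then for every Banach limit ξ on C_b([0,∞)): ξ(f_g) = ξ(p_c(r(f_g))), where r(f_g) is the sequence (f_g(k))_{k≥0} and p_c is piecewise-linear interpolation. -/
open Filter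
open scoped Topology

noncomputable def Lfun (t : ℝ) : ℝ := Real.log (1 + Real.exp t)

lemma Lfun_pos (t : ℝ) : 0 < Lfun t :=
  Real.log_pos (by nlinarith [Real.exp_pos t])

lemma Lfun_mono {a b : ℝ} (h : a ≤ b) : Lfun a ≤ Lfun b := by
  have h1 : (1:ℝ) + Real.exp a ≤ 1 + Real.exp b := by
    have := Real.exp_le_exp.mpr h; linarith
  exact Real.log_le_log (by positivity) h1

lemma Lfun_lip {a b : ℝ} (h : a ≤ b) : Lfun b - Lfun a ≤ b - a := by
  have ha : (0:ℝ) < 1 + Real.exp a := by positivity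
  have hb : (0:ℝ) < 1 + Real.exp b := by positivity
  have h1 : Lfun b - Lfun a = Real.log ((1 + Real.exp b) / (1 + Real.exp a)) :=
    (Real.log_div hb.ne' ha.ne').symm
  rw [h1]
  have h2 : (1 + Real.exp b) / (1 + Real.exp a) ≤ Real.exp (b - a) := by
    rw [div_le_iff₀ ha]
    have h3 : Real.exp (b - a) * Real.exp a = Real.exp b := by
      rw [← Real.exp_add]; ring_nf
    have h4 : (1:ℝ) ≤ Real.exp (b - a) := Real.one_le_exp (by linarith)
    nlinarith
  calc Real.log ((1 + Real.exp b) / (1 + Real.exp a)) ≤ Real.log (Real.exp (b - a)) :=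
        Real.log_le_log (by positivity) h2
    _ = b - a := Real.log_exp _

lemma Lfun_ge (t : ℝ) : t ≤ Lfun t := by
  have : Real.exp t ≤ 1 + Real.exp t := by linarith
  calc t = Real.log (Real.exp t) := (Real.log_exp t).symm
    _ ≤ Lfun t := Real.log_le_log (Real.exp_pos t) this

/-- Let `g : [1,∞) → ℝ` be nonnegative, nonincreasing, locally
integrable with bounded logarithmic averages, and `f_g(t) = (1/log(1+e^t)) ∫_1^{e^t} g`.
Then every Banach limit `ξ` on `C_b([0,∞))` satisfies `ξ(f_g) = ξ(p_c(r(f_g)))`, where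
`r(f_g) = (f_g(k))_k` and `p_c` is piecewise-linear interpolation. -/
theorem statement13 (g : ℝ → ℝ)
    (hg0 : ∀ s : ℝ, 1 ≤ s → 0 ≤ g s)
    (hganti : AntitoneOn g (Set.Ici (1 : ℝ)))
    (hgint : ∀ t : ℝ, 1 ≤ t → IntervalIntegrable g MeasureTheory.volume 1 t)
    (hgsup : ∃ B : ℝ, ∀ t : ℝ, 1 ≤ t →
      (1 / Real.log (1 + t)) * ∫ s in (1 : ℝ)..t, g s ≤ B)
    (fg : ℝ → ℝ)
    (hfg : ∀ t : ℝ, fg t =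
      (1 / Real.log (1 + Real.exp t)) * ∫ s in (1 : ℝ)..(Real.exp t), g s)
    (F Fc : Cb)
    (hF : ∀ t : Set.Ici (0 : ℝ), F t = fg t.1)
    (hFc : ∀ t : Set.Ici (0 : ℝ), Fc t = interpSeq (fun k : ℕ => fg k) t.1)
    (ξ : Cb →ₗ[ℝ] ℝ)
    (hξpos : ∀ f : Cb, (∀ t, 0 ≤ f t) → 0 ≤ ξ f)
    (hξone : ξ 1 = 1)
    (hξtrans : ∀ (a : ℝ) (ha : 0 < a) (f : Cb), ξ (translateCb a ha.le f) = ξ f) :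
    ξ F = ξ Fc := by
  -- ξ is monotone
  have hmono : ∀ u v : Cb, (∀ t, u t ≤ v t) → ξ u ≤ ξ v := by
    intro u v h
    have h1 : 0 ≤ ξ (v - u) := hξpos _ (fun t => by
      simp only [BoundedContinuousFunction.coe_sub, Pi.sub_apply]
      linarith [h t])
    rw [map_sub] at h1
    linarith
  have hfg0 : ∀ t : ℝ, 0 ≤ t → 0 ≤ fg t := by
    intro t ht
    rw [hfg t]
    have h1t : (1:ℝ) ≤ Real.exp t := Real.one_le_exp ht
    have hnn : 0 ≤ ∫ s in (1:ℝ)..(Real.exp t), g s :=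
      intervalIntegral.integral_nonneg h1t (fun u hu => hg0 u hu.1)
    have hl := Lfun_pos t
    rw [Lfun] at hl
    positivity
  -- an opaque bound M for fg on [0,∞)
  obtain ⟨M, hMnn, hfgM⟩ : ∃ M : ℝ, 0 ≤ M ∧ ∀ t : ℝ, 0 ≤ t → fg t ≤ M := by
    refine ⟨‖F‖, norm_nonneg F, fun t ht => ?_⟩
    have h1 := F.norm_coe_le_norm ⟨t, ht⟩
    rw [hF ⟨t, ht⟩, Real.norm_eq_abs] at h1
    exact (le_abs_self _).trans h1
  -- monotonicity of the integral part
  have hhmono : ∀ a b : ℝ, 0 ≤ a → a ≤ b →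
      (∫ s in (1:ℝ)..(Real.exp a), g s) ≤ ∫ s in (1:ℝ)..(Real.exp b), g s := by
    intro a b ha hab
    have h1a : (1:ℝ) ≤ Real.exp a := Real.one_le_exp (by linarith)
    have h1b : (1:ℝ) ≤ Real.exp b := Real.one_le_exp (by linarith)
    have hea : Real.exp a ≤ Real.exp b := Real.exp_le_exp.mpr hab
    have hint_ab : IntervalIntegrable g MeasureTheory.volume (Real.exp a) (Real.exp b) := by
      apply (hgint _ h1b).mono_set
      rw [Set.uIcc_of_le hea, Set.uIcc_of_le h1b]
      exact Set.Icc_subset_Icc h1a le_rfl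
    have hsplit : (∫ s in (1:ℝ)..(Real.exp a), g s) + (∫ s in (Real.exp a)..(Real.exp b), g s)
        = ∫ s in (1:ℝ)..(Real.exp b), g s :=
      intervalIntegral.integral_add_adjacent_intervals (hgint _ h1a) hint_ab
    have hnn : 0 ≤ ∫ s in (Real.exp a)..(Real.exp b), g s :=
      intervalIntegral.integral_nonneg hea (fun u hu => hg0 u (le_trans h1a hu.1))
    linarith
  -- fg t * Lfun t equals the integral
  have hfgL : ∀ t : ℝ, fg t * Lfun t = ∫ s in (1:ℝ)..(Real.exp t), g s := by
    intro t
    have hl := Lfun_pos t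
    rw [hfg t, Lfun] at *
    field_simp
  -- THE key lemma
  have key : ∀ a b : ℝ, 0 ≤ a → a ≤ b → fg a ≤ fg b + M * (b - a) / Lfun a := by
    intro a b ha hab
    have hLa := Lfun_pos a
    have hprod : fg a * Lfun a ≤ fg b * Lfun b := by
      rw [hfgL a, hfgL b]; exact hhmono a b ha hab
    have hfb0 : 0 ≤ fg b := hfg0 b (le_trans ha hab)
    have hfbM : fg b ≤ M := hfgM b (le_trans ha hab)
    have hlip := Lfun_lip hab
    have hLm := Lfun_mono hab
    have h2 : fg b * Lfun b ≤ fg b * Lfun a + M * (b - a) := by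
      have : fg b * (Lfun b - Lfun a) ≤ M * (b - a) :=
        mul_le_mul hfbM hlip (by linarith) hMnn
      nlinarith
    have h3 : fg a * Lfun a ≤ fg b * Lfun a + M * (b - a) := le_trans hprod h2
    rw [← sub_nonneg]
    have h4 : fg b + M * (b - a) / Lfun a - fg a
        = (fg b * Lfun a + M * (b - a) - fg a * Lfun a) / Lfun a := by
      field_simp
    rw [h4]
    exact div_nonneg (by linarith) hLa.le
  -- the error function c
  set c : Cb := BoundedContinuousFunction.ofNormedAddCommGroup
    (fun t : Set.Ici (0:ℝ) => 2 * M / Lfun (t.1 - 1))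
    (by
      apply Continuous.div continuous_const
      · apply Continuous.log
        · exact continuous_const.add ((continuous_subtype_val.sub continuous_const).rexp)
        · intro x
          exact (by positivity : (0:ℝ) < 1 + Real.exp (x.1 - 1)).ne'
      · intro x
        exact (Lfun_pos _).ne')
    (2 * M / Lfun (-1))
    (by
      intro x
      rw [Real.norm_eq_abs,
        abs_of_nonneg (div_nonneg (by positivity) (Lfun_pos _).le)]
      exact div_le_div₀ (by positivity) le_rfl (Lfun_pos _)
        (Lfun_mono (by linarith [show (0:ℝ) ≤ x.1 from x.2]))) with hc
  have hc_apply : ∀ x : Set.Ici (0:ℝ), c x = 2 * M / Lfun (x.1 - 1) := by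
    intro x; rw [hc]; rfl
  -- ξ c = 0
  have hc0 : ∀ x : Set.Ici (0:ℝ), 0 ≤ c x := by
    intro x
    rw [hc_apply]
    exact div_nonneg (by positivity) (Lfun_pos _).le
  have hcle : ∀ a : ℝ, 0 < a → ξ c ≤ 2 * M / Lfun (a - 1) := by
    intro a ha
    rw [← hξtrans a ha c]
    have hle : ∀ x : Set.Ici (0:ℝ),
        (translateCb a ha.le c) x ≤ ((2 * M / Lfun (a - 1)) • (1 : Cb)) x := by
      intro x
      have h1 : (translateCb a ha.le c) x = c ⟨x.1 + a, add_nonneg x.2 ha.le⟩ := rfl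
      rw [h1, hc_apply]
      have h2 : ((2 * M / Lfun (a - 1)) • (1 : Cb)) x = 2 * M / Lfun (a - 1) := by
        simp
      rw [h2]
      have h3 : ((⟨x.1 + a, add_nonneg x.2 ha.le⟩ : Set.Ici (0:ℝ)) : ℝ) = x.1 + a := rfl
      rw [h3]
      exact div_le_div₀ (by positivity) le_rfl (Lfun_pos _)
        (Lfun_mono (by linarith [show (0:ℝ) ≤ x.1 from x.2]))
    calc ξ (translateCb a ha.le c) ≤ ξ ((2 * M / Lfun (a - 1)) • (1 : Cb)) := hmono _ _ hle
      _ = 2 * M / Lfun (a - 1) := by rw [map_smul, hξone]; simp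
  have hξc : ξ c = 0 := by
    have hnn : 0 ≤ ξ c := hξpos c hc0
    have hle0 : ξ c ≤ 0 := by
      by_contra hcon
      push_neg at hcon
      have hεp : 0 < ξ c := hcon
      have hq0 : 0 ≤ 4 * M / ξ c := div_nonneg (by linarith) hεp.le
      have h1 := hcle (4 * M / ξ c + 1) (by linarith)
      have hL : 4 * M / ξ c ≤ Lfun (4 * M / ξ c + 1 - 1) := by
        have := Lfun_ge (4 * M / ξ c + 1 - 1)
        linarith
      have hLp : 0 < Lfun (4 * M / ξ c + 1 - 1) := Lfun_pos _
      have h2 : 2 * M / Lfun (4 * M / ξ c + 1 - 1) ≤ ξ c / 2 := by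
        rw [div_le_iff₀ hLp]
        calc 2 * M = (ξ c / 2) * (4 * M / ξ c) := by field_simp; ring
          _ ≤ (ξ c / 2) * Lfun (4 * M / ξ c + 1 - 1) :=
              mul_le_mul_of_nonneg_left hL (by linarith)
      linarith
    linarith
  -- the two pointwise inequalities
  have ineq1 : ∀ x : Set.Ici (0:ℝ), F x ≤ (translateCb 1 one_pos.le Fc) x + c x := by
    intro x
    obtain ⟨x, hx⟩ := x
    have hx' : (0:ℝ) ≤ x := hx
    obtain ⟨k, hk, hkx, hxk1⟩ : ∃ k : ℕ, ⌊x⌋₊ = k ∧ (k:ℝ) ≤ x ∧ x < (k:ℝ) + 1 :=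
      ⟨⌊x⌋₊, rfl, Nat.floor_le hx', Nat.lt_floor_add_one x⟩
    have htr : (translateCb 1 one_pos.le Fc) ⟨x, hx⟩ = Fc ⟨x + 1, add_nonneg hx' zero_le_one⟩ := rfl
    rw [hF, htr, hFc, hc_apply]
    simp only
    rw [interpSeq]
    have hfl : ⌊x + 1⌋₊ = k + 1 := by rw [Nat.floor_add_one hx', hk]
    rw [hfl]
    push_cast
    have hP : 0 < Lfun (x - 1) := Lfun_pos _
    have hk0 : (0:ℝ) ≤ (k:ℝ) := Nat.cast_nonneg k
    have A1 := key x ((k:ℝ) + 1) hx' (by linarith)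
    have A2 := key ((k:ℝ) + 1) ((k:ℝ) + 2) (by linarith) (by linarith)
    have hA3 : M * (((k:ℝ) + 1) - x) / Lfun x ≤ M / Lfun (x - 1) :=
      div_le_div₀ hMnn (by nlinarith) hP (Lfun_mono (by linarith))
    have hA2' : M * (((k:ℝ) + 2) - ((k:ℝ) + 1)) / Lfun ((k:ℝ) + 1) ≤ M / Lfun (x - 1) :=
      div_le_div₀ hMnn (by nlinarith) hP (Lfun_mono (by linarith))
    have hs0 : 0 ≤ x + 1 - ((k:ℝ) + 1) := by linarith
    have hs1 : x + 1 - ((k:ℝ) + 1) ≤ 1 := by linarith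
    have hB : (x + 1 - ((k:ℝ) + 1)) * (fg ((k:ℝ) + 2) - fg ((k:ℝ) + 1))
        ≥ -(M / Lfun (x - 1)) := by
      have h1 : fg ((k:ℝ) + 2) - fg ((k:ℝ) + 1) ≥ -(M / Lfun (x - 1)) := by linarith
      have hMP : 0 ≤ M / Lfun (x - 1) := div_nonneg hMnn hP.le
      nlinarith
    have hcast2 : ((k:ℝ) + 1) + 1 = (k:ℝ) + 2 := by ring
    rw [hcast2]
    have e : 2 * M / Lfun (x - 1) = M / Lfun (x - 1) + M / Lfun (x - 1) := by ring
    linarith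
  have ineq2 : ∀ x : Set.Ici (0:ℝ), Fc x ≤ (translateCb 1 one_pos.le F) x + c x := by
    intro x
    obtain ⟨x, hx⟩ := x
    have hx' : (0:ℝ) ≤ x := hx
    obtain ⟨k, hk, hkx, hxk1⟩ : ∃ k : ℕ, ⌊x⌋₊ = k ∧ (k:ℝ) ≤ x ∧ x < (k:ℝ) + 1 :=
      ⟨⌊x⌋₊, rfl, Nat.floor_le hx', Nat.lt_floor_add_one x⟩
    have htr : (translateCb 1 one_pos.le F) ⟨x, hx⟩ = F ⟨x + 1, add_nonneg hx' zero_le_one⟩ := rfl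
    rw [hFc, htr, hF, hc_apply]
    simp only
    rw [interpSeq, hk]
    push_cast
    have hP : 0 < Lfun (x - 1) := Lfun_pos _
    have hk0 : (0:ℝ) ≤ (k:ℝ) := Nat.cast_nonneg k
    have B1 := key (k:ℝ) ((k:ℝ) + 1) hk0 (by linarith)
    have B2 := key ((k:ℝ) + 1) (x + 1) (by linarith) (by linarith)
    have hB1' : M * (((k:ℝ) + 1) - (k:ℝ)) / Lfun (k:ℝ) ≤ M / Lfun (x - 1) :=
      div_le_div₀ hMnn (by nlinarith) hP (Lfun_mono (by linarith))
    have hB2' : M * ((x + 1) - ((k:ℝ) + 1)) / Lfun ((k:ℝ) + 1) ≤ M / Lfun (x - 1) :=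
      div_le_div₀ hMnn (by nlinarith) hP (Lfun_mono (by linarith))
    have hs0 : 0 ≤ x - (k:ℝ) := by linarith
    have hs1 : x - (k:ℝ) ≤ 1 := by linarith
    have hid : fg (k:ℝ) + (x - (k:ℝ)) * (fg ((k:ℝ) + 1) - fg (k:ℝ))
        + (1 - (x - (k:ℝ))) * (fg ((k:ℝ) + 1) - fg (k:ℝ)) = fg ((k:ℝ) + 1) := by ring
    have hm1 : (1 - (x - (k:ℝ))) * (fg ((k:ℝ) + 1) - fg (k:ℝ))
        ≥ -(M / Lfun (x - 1)) := by
      have h1 : fg ((k:ℝ) + 1) - fg (k:ℝ) ≥ -(M / Lfun (x - 1)) := by linarith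
      have hMP : 0 ≤ M / Lfun (x - 1) := div_nonneg hMnn hP.le
      nlinarith
    have e : 2 * M / Lfun (x - 1) = M / Lfun (x - 1) + M / Lfun (x - 1) := by ring
    linarith
  -- conclude
  have hstep : ∀ u v : Cb, (∀ x, u x ≤ (translateCb 1 one_pos.le v) x + c x) → ξ u ≤ ξ v := by
    intro u v h
    have h1 : ξ u ≤ ξ (translateCb 1 one_pos.le v + c) := by
      apply hmono
      intro x
      simpa using h x
    rw [map_add, hξtrans 1 one_pos v, hξc] at h1
    linarith
  exact le_antisymm (hstep F Fc ineq1) (hstep Fc F ineq2)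
end

section
/- Let g : [1,∞) → ℝ be nonnegative, nonincreasing, and locally integrable with sup_{t≥1} (1/log(1+t)) ∫_1^t g(s) ds < ∞, and let f_g(t) = (1/log(1+e^t)) ∫_1^{e^t} g(s) ds for t ≥ 0. Then for every Banach limit ξ' on ℓ∞: ξ'((f_g(k))_{k≥0}) = ξ'((∫_k^{k+1} f_g(s) ds)_{k≥0}). -/
open Filter
open scoped ENNReal Topology

noncomputable def shiftLp (x : lp (fun _ : ℕ => ℝ) ∞) : lp (fun _ : ℕ => ℝ) ∞ :=
  ⟨fun k => x (k + 1), memℓp_infty ⟨‖x‖, by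
    rintro r ⟨k, rfl⟩
    exact lp.norm_apply_le_norm ENNReal.top_ne_zero x (k + 1)⟩⟩

-- auxiliary analytic lemmas
lemma aux_L_pos (t : ℝ) : 0 < Real.log (1 + Real.exp t) :=
  Real.log_pos (by nlinarith [Real.exp_pos t])

lemma aux_L_mono {t₁ t₂ : ℝ} (h : t₁ ≤ t₂) :
    Real.log (1 + Real.exp t₁) ≤ Real.log (1 + Real.exp t₂) :=
  Real.log_le_log (by positivity) (by linarith [Real.exp_le_exp.2 h])

lemma aux_L_ge (t : ℝ) : t ≤ Real.log (1 + Real.exp t) := by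
  calc t = Real.log (Real.exp t) := (Real.log_exp t).symm
    _ ≤ Real.log (1 + Real.exp t) := Real.log_le_log (Real.exp_pos t) (by linarith)

lemma aux_L_step {a s : ℝ} (h : s ≤ a + 1) :
    Real.log (1 + Real.exp s) ≤ 1 + Real.log (1 + Real.exp a) := by
  have h1 : (1 : ℝ) + Real.exp s ≤ Real.exp 1 * (1 + Real.exp a) := by
    have := Real.exp_le_exp.2 h
    rw [Real.exp_add] at this
    nlinarith [Real.exp_pos a, Real.exp_pos s, Real.exp_one_gt_d9]
  calc Real.log (1 + Real.exp s) ≤ Real.log (Real.exp 1 * (1 + Real.exp a)) :=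
        Real.log_le_log (by positivity) h1
    _ = 1 + Real.log (1 + Real.exp a) := by
        rw [Real.log_mul (by positivity) (by positivity), Real.log_exp]

lemma aux_F_mono (g : ℝ → ℝ) (hg0 : ∀ s : ℝ, 1 ≤ s → 0 ≤ g s)
    (hgint : ∀ t : ℝ, 1 ≤ t → IntervalIntegrable g MeasureTheory.volume 1 t)
    {a b : ℝ} (ha : 1 ≤ a) (hab : a ≤ b) :
    (∫ s in (1:ℝ)..a, g s) ≤ ∫ s in (1:ℝ)..b, g s := by
  have hb : (1:ℝ) ≤ b := ha.trans hab
  have h1 : IntervalIntegrable g MeasureTheory.volume 1 a := hgint a ha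
  have h2 : IntervalIntegrable g MeasureTheory.volume a b := by
    apply (hgint b hb).mono_set
    rw [Set.uIcc_of_le hab, Set.uIcc_of_le hb]
    exact Set.Icc_subset_Icc ha le_rfl
  have hadd := intervalIntegral.integral_add_adjacent_intervals h1 h2
  have hnn : (0:ℝ) ≤ ∫ s in a..b, g s :=
    intervalIntegral.integral_nonneg hab (fun u hu => hg0 u (ha.trans hu.1))
  linarith

set_option maxHeartbeats 1000000 in
/-- Let `g : [1,∞) → ℝ` be nonnegative, nonincreasing, locally
integrable with bounded logarithmic averages, and `f_g(t) = (1/log(1+e^t)) ∫_1^{e^t} g`.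
Then every Banach limit `ξ'` on `ℓ∞` satisfies
`ξ'((f_g(k))_k) = ξ'((∫_k^{k+1} f_g)_k)`. -/
theorem statement14 (g : ℝ → ℝ)
    (hg0 : ∀ s : ℝ, 1 ≤ s → 0 ≤ g s)
    (hganti : AntitoneOn g (Set.Ici (1 : ℝ)))
    (hgint : ∀ t : ℝ, 1 ≤ t → IntervalIntegrable g MeasureTheory.volume 1 t)
    (hgsup : ∃ B : ℝ, ∀ t : ℝ, 1 ≤ t →
      (1 / Real.log (1 + t)) * ∫ s in (1 : ℝ)..t, g s ≤ B)
    (fg : ℝ → ℝ)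
    (hfg : ∀ t : ℝ, fg t =
      (1 / Real.log (1 + Real.exp t)) * ∫ s in (1 : ℝ)..(Real.exp t), g s)
    (x y : lp (fun _ : ℕ => ℝ) ∞)
    (hx : ∀ k : ℕ, x k = fg k)
    (hy : ∀ k : ℕ, y k = ∫ s in (k : ℝ)..((k : ℝ) + 1), fg s)
    (ξ' : lp (fun _ : ℕ => ℝ) ∞ →ₗ[ℝ] ℝ)
    (hpos : ∀ v : lp (fun _ : ℕ => ℝ) ∞, (∀ n, 0 ≤ v n) → 0 ≤ ξ' v)
    (hone : ξ' 1 = 1)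
    (hshift : ∀ v : lp (fun _ : ℕ => ℝ) ∞, ξ' (shiftLp v) = ξ' v) :
    ξ' x = ξ' y := by
  obtain ⟨B, hB⟩ := hgsup
  have hB0 : 0 ≤ B := by
    have := hB 1 le_rfl
    simpa using this
  -- F ≤ B * L
  have hFle : ∀ t : ℝ, 0 ≤ t →
      (∫ s in (1:ℝ)..(Real.exp t), g s) ≤ B * Real.log (1 + Real.exp t) := by
    intro t ht
    have h := hB (Real.exp t) (Real.one_le_exp ht)
    have hL := aux_L_pos t
    rw [div_mul_eq_mul_div, one_mul, div_le_iff₀ hL] at h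
    exact h
  have hF0 : ∀ t : ℝ, 0 ≤ t → 0 ≤ ∫ s in (1:ℝ)..(Real.exp t), g s := by
    intro t ht
    exact intervalIntegral.integral_nonneg (Real.one_le_exp ht)
      (fun u hu => hg0 u hu.1)
  -- pointwise lower bound
  have keyA : ∀ a s : ℝ, 0 ≤ a → a ≤ s → s ≤ a + 1 →
      fg a - B / Real.log (1 + Real.exp a) ≤ fg s := by
    intro a s ha has hs1
    have hs0 : 0 ≤ s := ha.trans has
    set La := Real.log (1 + Real.exp a) with hLa'
    set Ls := Real.log (1 + Real.exp s) with hLs'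
    set Fa := ∫ u in (1:ℝ)..(Real.exp a), g u with hFa'
    set Fs := ∫ u in (1:ℝ)..(Real.exp s), g u with hFs'
    have hLa : 0 < La := aux_L_pos a
    have hLs : 0 < Ls := aux_L_pos s
    have hLas : La ≤ Ls := aux_L_mono has
    have hstep : Ls ≤ 1 + La := aux_L_step hs1
    have hFa0 : 0 ≤ Fa := hF0 a ha
    have hFas : Fa ≤ Fs := aux_F_mono g hg0 hgint (Real.one_le_exp ha) (Real.exp_le_exp.2 has)
    have hFaB : Fa ≤ B * La := hFle a ha
    rw [hfg a, hfg s]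
    have q1 : Fa * (Ls - La) ≤ (B * La) * (Ls - La) :=
      mul_le_mul_of_nonneg_right hFaB (by linarith)
    have q2 : (B * La) * (Ls - La) ≤ (B * La) * 1 :=
      mul_le_mul_of_nonneg_left (by linarith) (by positivity)
    have q3 : Fa * La ≤ Fs * La := mul_le_mul_of_nonneg_right hFas hLa.le
    have q4 : B * La ≤ B * Ls := mul_le_mul_of_nonneg_left hLas hB0
    have key : (Fa - B) * Ls ≤ Fs * La := by nlinarith
    have h2 : 1 / La * Fa - B / La = (Fa - B) / La := by ring
    have h3 : 1 / Ls * Fs = Fs / Ls := by ring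
    rw [h2, h3]
    exact (div_le_div_iff₀ hLa hLs).2 key
  -- pointwise upper bound
  have keyB : ∀ a s : ℝ, 0 ≤ a → a ≤ s → s ≤ a + 1 →
      fg s ≤ fg (a + 1) + B / Real.log (1 + Real.exp a) := by
    intro a s ha has hs1
    have hs0 : 0 ≤ s := ha.trans has
    set La := Real.log (1 + Real.exp a) with hLa'
    set Ls := Real.log (1 + Real.exp s) with hLs'
    set Lb := Real.log (1 + Real.exp (a+1)) with hLb'
    set Fs := ∫ u in (1:ℝ)..(Real.exp s), g u with hFs'
    set Fb := ∫ u in (1:ℝ)..(Real.exp (a+1)), g u with hFb'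
    have hLa : 0 < La := aux_L_pos a
    have hLs : 0 < Ls := aux_L_pos s
    have hLb : 0 < Lb := aux_L_pos (a+1)
    have hLas : La ≤ Ls := aux_L_mono has
    have hLsb : Ls ≤ Lb := aux_L_mono hs1
    have hstep : Lb ≤ 1 + La := aux_L_step le_rfl
    have hFs0 : 0 ≤ Fs := hF0 s hs0
    have hFsb : Fs ≤ Fb := aux_F_mono g hg0 hgint (Real.one_le_exp hs0) (Real.exp_le_exp.2 hs1)
    have hFbB : Fb ≤ B * Lb := hFle (a+1) (by linarith)
    rw [hfg s, hfg (a+1)]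
    have p1 : Fs * (Lb * La) ≤ Fb * (Lb * La) :=
      mul_le_mul_of_nonneg_right hFsb (by positivity)
    have p2 : Fb * (Lb - Ls) ≤ (B * Lb) * (Lb - Ls) :=
      mul_le_mul_of_nonneg_right hFbB (by linarith)
    have p3 : (B * Lb) * (Lb - Ls) ≤ (B * Lb) * 1 :=
      mul_le_mul_of_nonneg_left (by linarith) (by positivity)
    have p4 : (Fb * (Lb - Ls)) * La ≤ (B * Lb) * La := by nlinarith
    have p5 : (B * Lb) * La ≤ (B * Lb) * Ls :=
      mul_le_mul_of_nonneg_left hLas (by positivity)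
    have key : Fs * (Lb * La) ≤ (Fb * La + B * Lb) * Ls := by nlinarith
    have h2 : 1 / Ls * Fs = Fs / Ls := by ring
    rw [h2]
    calc Fs / Ls ≤ (Fb * La + B * Lb) / (Lb * La) := by
          rw [div_le_div_iff₀ hLs (by positivity)]
          nlinarith
      _ = 1 / Lb * Fb + B / La := by field_simp
  -- integrability of fg on [k, k+1]
  have hInt : ∀ k : ℕ, IntervalIntegrable fg MeasureTheory.volume k ((k:ℝ)+1) := by
    intro k
    have hk0 : (0:ℝ) ≤ (k:ℝ) := Nat.cast_nonneg k
    have hmono : MonotoneOn (fun t => ∫ s in (1:ℝ)..(Real.exp t), g s)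
        (Set.uIcc (k:ℝ) ((k:ℝ)+1)) := by
      rw [Set.uIcc_of_le (by linarith)]
      intro t₁ ht₁ t₂ _ h12
      exact aux_F_mono g hg0 hgint (Real.one_le_exp (hk0.trans ht₁.1)) (Real.exp_le_exp.2 h12)
    have hcont : ContinuousOn (fun t => 1 / Real.log (1 + Real.exp t))
        (Set.uIcc (k:ℝ) ((k:ℝ)+1)) := by
      apply Continuous.continuousOn
      apply Continuous.div continuous_const
      · exact (continuous_const.add Real.continuous_exp).log (fun t => (add_pos one_pos (Real.exp_pos t)).ne')
      · intro t; exact (aux_L_pos t).ne'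
    have := (hmono.intervalIntegrable (μ := MeasureTheory.volume)).mul_continuousOn hcont
    have heq : fg = fun t => (∫ s in (1:ℝ)..(Real.exp t), g s) * (1 / Real.log (1 + Real.exp t)) := by
      funext t; rw [hfg t]; ring
    rw [heq]
    exact this
  -- integral bounds
  have hy_lb : ∀ k : ℕ, fg k - B / Real.log (1 + Real.exp k) ≤ y k := by
    intro k
    rw [hy k]
    have hk0 : (0:ℝ) ≤ (k:ℝ) := Nat.cast_nonneg k
    have h := intervalIntegral.integral_mono_on (by linarith : (k:ℝ) ≤ (k:ℝ)+1)
      intervalIntegrable_const (hInt k)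
      (fun s hs => keyA k s hk0 hs.1 hs.2)
    simpa using h
  have hy_ub : ∀ k : ℕ, y k ≤ fg ((k:ℝ) + 1) + B / Real.log (1 + Real.exp k) := by
    intro k
    rw [hy k]
    have hk0 : (0:ℝ) ≤ (k:ℝ) := Nat.cast_nonneg k
    have h := intervalIntegral.integral_mono_on (by linarith : (k:ℝ) ≤ (k:ℝ)+1)
      (hInt k) intervalIntegrable_const
      (fun s hs => keyB k s hk0 hs.1 hs.2)
    simpa using h
  -- Banach limit machinery
  have hiter_apply : ∀ (N : ℕ) (v : lp (fun _ : ℕ => ℝ) ∞) (k : ℕ),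
      (shiftLp^[N] v) k = v (k + N) := by
    intro N
    induction N with
    | zero => intro v k; simp
    | succ n ih =>
        intro v k
        rw [Function.iterate_succ_apply']
        have h0 : ((shiftLp (shiftLp^[n] v)) : ℕ → ℝ) k = ((shiftLp^[n] v) : ℕ → ℝ) (k+1) := rfl
        rw [h0, ih v (k+1), show k + 1 + n = k + (n + 1) from by omega]
  have hiter_xi : ∀ (N : ℕ) (v : lp (fun _ : ℕ => ℝ) ∞),
      ξ' (shiftLp^[N] v) = ξ' v := by
    intro N
    induction N with
    | zero => intro v; simp
    | succ n ih =>
        intro v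
        rw [Function.iterate_succ_apply', hshift, ih]
  have tail_le : ∀ v : lp (fun _ : ℕ => ℝ) ∞,
      (∀ ε : ℝ, 0 < ε → ∃ N : ℕ, ∀ k : ℕ, v (k + N) ≤ ε) → ξ' v ≤ 0 := by
    intro v hv
    apply le_of_forall_pos_le_add
    intro ε hε
    obtain ⟨N, hN⟩ := hv ε hε
    set w := shiftLp^[N] v with hw
    have h1 : ξ' w = ξ' v := hiter_xi N v
    have h2 : 0 ≤ ξ' (ε • (1 : lp (fun _ : ℕ => ℝ) ∞) - w) := by
      apply hpos
      intro n
      rw [lp.coeFn_sub, lp.coeFn_smul, lp.infty_coeFn_one]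
      simp only [Pi.sub_apply, Pi.smul_apply, Pi.one_apply, smul_eq_mul, mul_one]
      rw [hiter_apply N v n]
      linarith [hN n]
    rw [map_sub, map_smul, hone, smul_eq_mul, mul_one] at h2
    linarith
  -- first inequality : ξ' x ≤ ξ' y
  have hxy : ξ' x ≤ ξ' y := by
    have h := tail_le (x - y) ?_
    · rw [map_sub] at h; linarith
    · intro ε hε
      obtain ⟨N, hN⟩ := exists_nat_gt (B / ε)
      refine ⟨N, fun k => ?_⟩
      have hcoe : ((x - y : lp (fun _ : ℕ => ℝ) ∞) : ℕ → ℝ) (k + N)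
          = x (k + N) - y (k + N) := by rw [lp.coeFn_sub]; rfl
      rw [hcoe, hx (k + N)]
      have hlb := hy_lb (k + N)
      have hL : 0 < Real.log (1 + Real.exp ((k + N : ℕ) : ℝ)) := aux_L_pos _
      have hLge : (B / ε) < Real.log (1 + Real.exp ((k + N : ℕ) : ℝ)) := by
        have h1 : ((k + N : ℕ) : ℝ) ≤ Real.log (1 + Real.exp ((k + N : ℕ) : ℝ)) :=
          aux_L_ge _
        have h2 : (N : ℝ) ≤ ((k + N : ℕ) : ℝ) := by push_cast; linarith [Nat.cast_nonneg (α := ℝ) k]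
        linarith
      have : B / Real.log (1 + Real.exp ((k + N : ℕ) : ℝ)) ≤ ε := by
        rw [div_le_iff₀ hL]
        rw [div_lt_iff₀ hε] at hLge
        linarith [mul_comm ε (Real.log (1 + Real.exp ((k + N : ℕ) : ℝ)))]
      linarith
  -- second inequality : ξ' y ≤ ξ' x
  have hyx : ξ' y ≤ ξ' x := by
    have h := tail_le (y - shiftLp x) ?_
    · rw [map_sub, hshift x] at h; linarith
    · intro ε hε
      obtain ⟨N, hN⟩ := exists_nat_gt (B / ε)
      refine ⟨N, fun k => ?_⟩
      have hcoe : ((y - shiftLp x : lp (fun _ : ℕ => ℝ) ∞) : ℕ → ℝ) (k + N)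
          = y (k + N) - x (k + N + 1) := by rw [lp.coeFn_sub]; rfl
      rw [hcoe, hx (k + N + 1)]
      have hub := hy_ub (k + N)
      have hcast : ((k + N + 1 : ℕ) : ℝ) = ((k + N : ℕ) : ℝ) + 1 := by push_cast; ring
      rw [hcast]
      have hL : 0 < Real.log (1 + Real.exp ((k + N : ℕ) : ℝ)) := aux_L_pos _
      have hLge : (B / ε) < Real.log (1 + Real.exp ((k + N : ℕ) : ℝ)) := by
        have h1 : ((k + N : ℕ) : ℝ) ≤ Real.log (1 + Real.exp ((k + N : ℕ) : ℝ)) :=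
          aux_L_ge _
        have h2 : (N : ℝ) ≤ ((k + N : ℕ) : ℝ) := by push_cast; linarith [Nat.cast_nonneg (α := ℝ) k]
        linarith
      have : B / Real.log (1 + Real.exp ((k + N : ℕ) : ℝ)) ≤ ε := by
        rw [div_le_iff₀ hL]
        rw [div_lt_iff₀ hε] at hLge
        linarith [mul_comm ε (Real.log (1 + Real.exp ((k + N : ℕ) : ℝ)))]
      linarith
  linarith
end

section
/- For every Banach limit ξ on C_b([0,∞)) there exists a Banach limit ξ' on ℓ∞ such that ξ(f_g) = ξ'((f_g(k))_{k≥0}) for every nonnegative, nonincreasing, locally integrable g : [1,∞) → ℝ with sup_{t≥1} (1/log(1+t)) ∫_1^t g(s) ds < ∞, where f_g(t) = (1/log(1+e^t)) ∫_1^{e^t} g(s) ds. -/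
open Filter
open scoped ENNReal Topology

/-- A Banach limit on `C_b([0,∞))`: a positive linear functional with `ξ 1 = 1`,
invariant under every translation `T_a`, `a > 0`. -/
def IsBanachLimitCb (ξ : Cb →ₗ[ℝ] ℝ) : Prop :=
  (∀ f : Cb, (∀ t, 0 ≤ f t) → 0 ≤ ξ f) ∧ ξ 1 = 1 ∧
    ∀ (a : ℝ) (ha : 0 < a) (f : Cb), ξ (translateCb a ha.le f) = ξ f

/-- A Banach limit on `ℓ∞`: a positive linear functional with `ω 1 = 1`, invariant under
the shift. -/
def IsBanachLimitLp (ω : lp (fun _ : ℕ => ℝ) ∞ →ₗ[ℝ] ℝ) : Prop :=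
  (∀ v : lp (fun _ : ℕ => ℝ) ∞, (∀ n, 0 ≤ v n) → 0 ≤ ω v) ∧ ω 1 = 1 ∧
    ∀ v : lp (fun _ : ℕ => ℝ) ∞, ω (shiftLp v) = ω v

section AuxStatement15
open MeasureTheory intervalIntegral

/-- step extension of a sequence -/
noncomputable def stepFn (v : lp (fun _ : ℕ => ℝ) ∞) : ℝ → ℝ := fun u => v (⌊u⌋.toNat)

lemma stepFn_measurable (v : lp (fun _ : ℕ => ℝ) ∞) : Measurable (stepFn v) := by
  exact measurable_from_top.comp ((measurable_from_top (f:=Int.toNat)).comp Int.measurable_floor)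

lemma stepFn_bound (v : lp (fun _ : ℕ => ℝ) ∞) (u : ℝ) : ‖stepFn v u‖ ≤ ‖v‖ :=
  lp.norm_apply_le_norm ENNReal.top_ne_zero v _

lemma stepFn_intervalIntegrable (v : lp (fun _ : ℕ => ℝ) ∞) (a b : ℝ) :
    IntervalIntegrable (stepFn v) volume a b := by
  rw [intervalIntegrable_iff]
  exact Measure.integrableOn_of_bounded measure_Ioc_lt_top.ne
    (stepFn_measurable v).aestronglyMeasurable
    (Filter.Eventually.of_forall fun u => stepFn_bound v u)

/-- the smoothing of a sequence into a bounded continuous function -/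
noncomputable def smoothCb (v : lp (fun _ : ℕ => ℝ) ∞) : Cb :=
  BoundedContinuousFunction.ofNormedAddCommGroup
    (fun t : Set.Ici (0:ℝ) =>
      (∫ u in (0:ℝ)..(t.1 + 1), stepFn v u) - ∫ u in (0:ℝ)..t.1, stepFn v u)
    (by
      have hP : Continuous fun b : ℝ => ∫ u in (0:ℝ)..b, stepFn v u :=
        continuous_primitive (fun a b => stepFn_intervalIntegrable v a b) 0
      exact (hP.comp (continuous_subtype_val.add continuous_const)).sub
        (hP.comp continuous_subtype_val))
    ‖v‖
    (by
      intro t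
      have h1 : (∫ u in (0:ℝ)..(t.1 + 1), stepFn v u) - ∫ u in (0:ℝ)..t.1, stepFn v u
          = ∫ u in t.1..(t.1+1), stepFn v u :=
        integral_interval_sub_left (stepFn_intervalIntegrable v _ _)
          (stepFn_intervalIntegrable v _ _)
      rw [h1]
      have := intervalIntegral.norm_integral_le_of_norm_le_const
        (C := ‖v‖) (a := t.1) (b := t.1+1) (f := stepFn v)
        (fun u _ => stepFn_bound v u)
      rw [show t.1 + 1 - t.1 = 1 by ring, abs_one, mul_one] at this
      exact this)

lemma smoothCb_apply (v : lp (fun _ : ℕ => ℝ) ∞) (t : Set.Ici (0:ℝ)) :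
    smoothCb v t = ∫ u in t.1..(t.1+1), stepFn v u := by
  simp only [smoothCb, BoundedContinuousFunction.coe_ofNormedAddCommGroup]
  exact integral_interval_sub_left (stepFn_intervalIntegrable v _ _)
    (stepFn_intervalIntegrable v _ _)

lemma smoothCb_add (v w : lp (fun _ : ℕ => ℝ) ∞) :
    smoothCb (v + w) = smoothCb v + smoothCb w := by
  ext t
  simp only [BoundedContinuousFunction.coe_add, Pi.add_apply, smoothCb_apply]
  rw [← integral_add (stepFn_intervalIntegrable v _ _) (stepFn_intervalIntegrable w _ _)]
  apply integral_congr
  intro u _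
  simp only [stepFn, lp.coeFn_add, Pi.add_apply]

lemma smoothCb_smul (c : ℝ) (v : lp (fun _ : ℕ => ℝ) ∞) :
    smoothCb (c • v) = c • smoothCb v := by
  ext t
  simp only [BoundedContinuousFunction.coe_smul, Pi.smul_apply, smoothCb_apply, smul_eq_mul]
  rw [← intervalIntegral.integral_const_mul]
  apply integral_congr
  intro u _
  simp only [stepFn, lp.coeFn_smul, Pi.smul_apply, smul_eq_mul]

lemma smoothCb_one : smoothCb (1 : lp (fun _ : ℕ => ℝ) ∞) = 1 := by
  ext t
  rw [smoothCb_apply]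
  simp only [BoundedContinuousFunction.coe_one, Pi.one_apply]
  have h : ∀ u ∈ Set.uIcc t.1 (t.1+1), stepFn 1 u = 1 := by
    intro u _
    simp [stepFn, lp.infty_coeFn_one]
  rw [integral_congr h]
  simp

lemma smoothCb_nonneg (v : lp (fun _ : ℕ => ℝ) ∞) (hv : ∀ n, 0 ≤ v n) (t : Set.Ici (0:ℝ)) :
    0 ≤ smoothCb v t := by
  rw [smoothCb_apply]
  apply integral_nonneg (by linarith : t.1 ≤ t.1 + 1)
  intro u _
  exact hv _

lemma smoothCb_shift (v : lp (fun _ : ℕ => ℝ) ∞) :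
    translateCb 1 one_pos.le (smoothCb v) = smoothCb (shiftLp v) := by
  ext t
  have ht : (0:ℝ) ≤ t.1 := t.2
  show smoothCb v ⟨t.1 + 1, _⟩ = smoothCb (shiftLp v) t
  rw [smoothCb_apply, smoothCb_apply]
  have h : ∀ u ∈ Set.uIcc t.1 (t.1+1), stepFn (shiftLp v) u = stepFn v (u+1) := by
    intro u hu
    have hu0 : (0:ℝ) ≤ u := by
      rcases Set.mem_uIcc.1 hu with h|h <;> linarith [h.1]
    have hf0 : (0:ℤ) ≤ ⌊u⌋ := Int.floor_nonneg.2 hu0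
    have h1 : ⌊u + 1⌋ = ⌊u⌋ + 1 := by exact_mod_cast Int.floor_add_intCast u 1
    have h2 : (⌊u⌋ + 1).toNat = ⌊u⌋.toNat + 1 := by omega
    simp only [stepFn, h1, h2]
    rfl
  rw [integral_congr h, integral_comp_add_right (fun u => stepFn v u) 1]

/-- The induced functional on `ℓ∞`. -/
noncomputable def xiLp (ξ : Cb →ₗ[ℝ] ℝ) : lp (fun _ : ℕ => ℝ) ∞ →ₗ[ℝ] ℝ where
  toFun v := ξ (smoothCb v)
  map_add' v w := by rw [smoothCb_add, map_add]
  map_smul' c v := by rw [smoothCb_smul, _root_.map_smul]; rfl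

lemma xiLp_isBanachLimit (ξ : Cb →ₗ[ℝ] ℝ) (hξ : IsBanachLimitCb ξ) :
    IsBanachLimitLp (xiLp ξ) := by
  refine ⟨fun v hv => hξ.1 _ (smoothCb_nonneg v hv), ?_, fun v => ?_⟩
  · show ξ (smoothCb 1) = 1
    rw [smoothCb_one]; exact hξ.2.1
  · show ξ (smoothCb (shiftLp v)) = ξ (smoothCb v)
    rw [← smoothCb_shift]
    exact hξ.2.2 1 one_pos _

lemma xiBound (ξ : Cb →ₗ[ℝ] ℝ) (hξ : IsBanachLimitCb ξ) (q : Cb) : |ξ q| ≤ ‖q‖ := by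
  obtain ⟨hpos, hone, -⟩ := hξ
  have hqt : ∀ t, |q t| ≤ ‖q‖ := fun t => by
    simpa [Real.norm_eq_abs] using q.norm_coe_le_norm t
  have h1 : 0 ≤ ξ (‖q‖ • 1 - q) := by
    apply hpos
    intro t
    have := abs_le.1 (hqt t)
    simp only [BoundedContinuousFunction.coe_sub, BoundedContinuousFunction.coe_smul,
      BoundedContinuousFunction.coe_one, Pi.sub_apply, Pi.smul_apply, Pi.one_apply,
      smul_eq_mul, mul_one]
    linarith [this.2]
  have h2 : 0 ≤ ξ (‖q‖ • 1 + q) := by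
    apply hpos
    intro t
    have := abs_le.1 (hqt t)
    simp only [BoundedContinuousFunction.coe_add, BoundedContinuousFunction.coe_smul,
      BoundedContinuousFunction.coe_one, Pi.add_apply, Pi.smul_apply, Pi.one_apply,
      smul_eq_mul, mul_one]
    linarith [this.1]
  rw [map_sub, LinearMap.map_smul, hone, smul_eq_mul, mul_one] at h1
  rw [map_add, LinearMap.map_smul, hone, smul_eq_mul, mul_one] at h2
  exact abs_le.2 ⟨by linarith, by linarith⟩

end AuxStatement15

open MeasureTheory intervalIntegral in
/-- For every Banach limit `ξ` on `C_b([0,∞))` there exists a Banach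
limit `ξ'` on `ℓ∞` such that `ξ(f_g) = ξ'((f_g(k))_k)` for every nonnegative,
nonincreasing, locally integrable `g : [1,∞) → ℝ` with bounded logarithmic averages,
where `f_g(t) = (1/log(1+e^t)) ∫_1^{e^t} g`. -/
theorem statement15 (ξ : Cb →ₗ[ℝ] ℝ) (hξ : IsBanachLimitCb ξ) :
    ∃ ξ' : lp (fun _ : ℕ => ℝ) ∞ →ₗ[ℝ] ℝ, IsBanachLimitLp ξ' ∧
      ∀ g : ℝ → ℝ,
        (∀ s : ℝ, 1 ≤ s → 0 ≤ g s) →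
        AntitoneOn g (Set.Ici (1 : ℝ)) →
        (∀ t : ℝ, 1 ≤ t → IntervalIntegrable g MeasureTheory.volume 1 t) →
        (∃ B : ℝ, ∀ t : ℝ, 1 ≤ t →
          (1 / Real.log (1 + t)) * ∫ s in (1 : ℝ)..t, g s ≤ B) →
        ∀ fg : ℝ → ℝ,
          (∀ t : ℝ, fg t =
            (1 / Real.log (1 + Real.exp t)) * ∫ s in (1 : ℝ)..(Real.exp t), g s) →
          ∀ F : Cb, (∀ t : Set.Ici (0 : ℝ), F t = fg t.1) →
          ∀ x : lp (fun _ : ℕ => ℝ) ∞, (∀ k : ℕ, x k = fg k) →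
            ξ F = ξ' x := by
  refine ⟨xiLp ξ, xiLp_isBanachLimit ξ hξ, ?_⟩
  intro g hg0 hganti hgint hBex fg hfg F hF x hx
  obtain ⟨B, hB⟩ := hBex
  set A : ℝ → ℝ := fun t => ∫ s in (1:ℝ)..Real.exp t, g s with hAdef
  set L : ℝ → ℝ := fun t => Real.log (1 + Real.exp t) with hLdef
  have hExp1 : ∀ t : ℝ, 0 ≤ t → 1 ≤ Real.exp t := fun t ht => by
    calc (1:ℝ) = Real.exp 0 := Real.exp_zero.symm
    _ ≤ Real.exp t := Real.exp_le_exp.2 ht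
  have hL_pos : ∀ t : ℝ, 0 < L t := fun t =>
    Real.log_pos (by linarith [Real.exp_pos t])
  have hL_mono : ∀ a b : ℝ, a ≤ b → L a ≤ L b := fun a b hab =>
    Real.log_le_log (by linarith [Real.exp_pos a]) (by linarith [Real.exp_le_exp.2 hab])
  have hL_ge : ∀ t : ℝ, t ≤ L t := fun t => by
    calc t = Real.log (Real.exp t) := (Real.log_exp t).symm
    _ ≤ L t := Real.log_le_log (Real.exp_pos t) (by linarith)
  have hL_lip : ∀ r' r : ℝ, r' ≤ r → L r ≤ L r' + (r - r') := by
    intro r' r h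
    have h1 : 1 + Real.exp r ≤ Real.exp (r - r') * (1 + Real.exp r') := by
      have e1 : (1:ℝ) ≤ Real.exp (r - r') := hExp1 _ (by linarith)
      have e2 : Real.exp (r - r') * Real.exp r' = Real.exp r := by
        rw [← Real.exp_add]; ring_nf
      nlinarith [Real.exp_pos r']
    calc L r ≤ Real.log (Real.exp (r - r') * (1 + Real.exp r')) :=
          Real.log_le_log (by linarith [Real.exp_pos r]) h1
    _ = (r - r') + L r' := by
        rw [Real.log_mul (Real.exp_ne_zero _) (by linarith [Real.exp_pos r'] : (1:ℝ) + Real.exp r' ≠ 0),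
          Real.log_exp]
    _ = L r' + (r - r') := by ring
  have hgint' : ∀ a b : ℝ, 1 ≤ a → 1 ≤ b → IntervalIntegrable g volume a b :=
    fun a b ha hb => (hgint a ha).symm.trans (hgint b hb)
  have hA_sub : ∀ r' r : ℝ, 0 ≤ r' → r' ≤ r →
      A r = A r' + ∫ s in Real.exp r'..Real.exp r, g s := by
    intro r' r h0 h
    exact (integral_add_adjacent_intervals (hgint _ (hExp1 _ h0))
      (hgint' _ _ (hExp1 _ h0) (hExp1 _ (h0.trans h)))).symm
  have hA_mono : ∀ r' r : ℝ, 0 ≤ r' → r' ≤ r → A r' ≤ A r := by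
    intro r' r h0 h
    rw [hA_sub r' r h0 h]
    have : 0 ≤ ∫ s in Real.exp r'..Real.exp r, g s := by
      apply integral_nonneg (Real.exp_le_exp.2 h)
      intro u hu
      exact hg0 u ((hExp1 _ h0).trans hu.1)
    linarith
  have hA_zero : A 0 = 0 := by
    simp only [hAdef, Real.exp_zero, integral_same]
  have hA_nonneg : ∀ r : ℝ, 0 ≤ r → 0 ≤ A r := fun r hr => by
    have := hA_mono 0 r le_rfl hr
    rw [hA_zero] at this
    exact this
  have hAB : ∀ t : ℝ, 0 ≤ t → A t ≤ B * L t := by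
    intro t ht
    have h := hB (Real.exp t) (hExp1 _ ht)
    rw [one_div, inv_mul_eq_div, div_le_iff₀ (hL_pos t)] at h
    linarith
  have hB0 : 0 ≤ B := by
    have := hB 1 le_rfl
    simpa using this
  have hfg2 : ∀ t : ℝ, fg t = A t / L t := fun t => by
    rw [hfg t, one_div, inv_mul_eq_div]
  -- oscillation estimates
  have osc1 : ∀ t r' r : ℝ, 2 ≤ t → t - 1 ≤ r' → r' ≤ r → r ≤ t + 1 →
      fg r - fg r' ≤ (A (t+1) - A (t-1)) / (t-1) := by
    intro t r' r ht h1 h2 h3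
    have hr'0 : (0:ℝ) ≤ r' := by linarith
    have hr0 : (0:ℝ) ≤ r := by linarith
    rw [hfg2 r, hfg2 r']
    have s1 : A r' / L r ≤ A r' / L r' := by
      gcongr
      exacts [hA_nonneg r' hr'0, hL_pos r', hL_mono _ _ h2]
    have s2 : A r / L r - A r' / L r = (A r - A r') / L r := by ring
    have s3 : (A r - A r') / L r ≤ (A (t+1) - A (t-1)) / (t-1) := by
      apply div_le_div₀ (by linarith [hA_mono (t-1) (t+1) (by linarith) (by linarith)])
        (by linarith [hA_mono r (t+1) hr0 h3, hA_mono (t-1) r' (by linarith) h1])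
        (by linarith)
      linarith [hL_ge r]
    linarith
  have osc2 : ∀ t r' r : ℝ, 2 ≤ t → t - 1 ≤ r' → r' ≤ r → r ≤ t + 1 →
      fg r' - fg r ≤ 2 * B / (t-1) := by
    intro t r' r ht h1 h2 h3
    have hr'0 : (0:ℝ) ≤ r' := by linarith
    have hr0 : (0:ℝ) ≤ r := by linarith
    rw [hfg2 r, hfg2 r']
    have d1 : A r' / L r ≤ A r / L r := by
      gcongr
      exacts [(hL_pos r).le, hA_mono _ _ hr'0 h2]
    have hne1 : L r' ≠ 0 := (hL_pos r').ne'
    have hne2 : L r ≠ 0 := (hL_pos r).ne'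
    have d2 : A r' / L r' - A r' / L r = A r' * (L r - L r') / (L r' * L r) := by
      field_simp
    have hLL : (0:ℝ) < L r' * L r := mul_pos (hL_pos r') (hL_pos r)
    have hLd : 0 ≤ L r - L r' := by linarith [hL_mono r' r h2]
    have d3 : A r' * (L r - L r') / (L r' * L r) ≤ (B * L r') * (L r - L r') / (L r' * L r) := by
      gcongr
      exact hAB r' hr'0
    have d4 : (B * L r') * (L r - L r') / (L r' * L r) = B * (L r - L r') / L r := by
      field_simp
    have d5 : B * (L r - L r') / L r ≤ 2 * B / (t-1) := by
      apply div_le_div₀ (by positivity)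
      · have := hL_lip r' r h2
        nlinarith
      · linarith
      · linarith [hL_ge r]
    linarith
  set W : ℝ → ℝ := fun τ => (A (τ+1) - A (τ-1) + 2*B) / (τ-1) with hWdef
  have hW_nonneg : ∀ τ : ℝ, 2 ≤ τ → 0 ≤ W τ := by
    intro τ hτ
    apply div_nonneg _ (by linarith)
    linarith [hA_mono (τ-1) (τ+1) (by linarith) (by linarith)]
  have osc : ∀ t p q : ℝ, 2 ≤ t → t - 1 ≤ p → p ≤ t + 1 → t - 1 ≤ q → q ≤ t + 1 →
      |fg p - fg q| ≤ W t := by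
    intro t p q ht hp1 hp2 hq1 hq2
    have hnum : 0 ≤ A (t+1) - A (t-1) :=
      by linarith [hA_mono (t-1) (t+1) (by linarith) (by linarith)]
    have hden : (0:ℝ) < t - 1 := by linarith
    have hsplit : W t = (A (t+1) - A (t-1))/(t-1) + 2*B/(t-1) := by
      exact add_div _ _ _
    have hterm1 : 0 ≤ (A (t+1) - A (t-1))/(t-1) := div_nonneg hnum hden.le
    have hterm2 : 0 ≤ 2*B/(t-1) := by positivity
    have key : ∀ a b : ℝ, t - 1 ≤ a → a ≤ b → b ≤ t + 1 →
        fg b - fg a ≤ W t ∧ fg a - fg b ≤ W t := by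
      intro a b ha hab hb
      constructor
      · have := osc1 t a b ht ha hab hb
        linarith
      · have := osc2 t a b ht ha hab hb
        linarith
    rcases le_total p q with hpq | hpq
    · rcases key p q hp1 hpq hq2 with ⟨k1, k2⟩
      exact abs_sub_le_iff.2 ⟨k2, k1⟩
    · rcases key q p hq1 hpq hp2 with ⟨k1, k2⟩
      exact abs_sub_le_iff.2 ⟨k1, k2⟩
  -- L upper bound
  have hL0 : L 0 = Real.log 2 := by
    rw [hLdef]
    norm_num [Real.exp_zero]
  have hL_le : ∀ t : ℝ, 0 ≤ t → L t ≤ t + 1 := by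
    intro t ht
    have := hL_lip 0 t ht
    rw [hL0] at this
    have hlog2 : Real.log 2 < 1 := by
      have := Real.log_two_lt_d9
      linarith
    linarith
  -- pointwise comparison between F and the smoothing of x
  set h : Cb := F - smoothCb x with hhdef
  have hnear : ∀ τ : Set.Ici (0:ℝ), 2 ≤ τ.1 → |h τ| ≤ W τ.1 := by
    intro τ hτ
    have hsub : h τ = fg τ.1 - ∫ u in τ.1..(τ.1+1), stepFn x u := by
      rw [hhdef, BoundedContinuousFunction.coe_sub, Pi.sub_apply, hF τ, smoothCb_apply]
    have e : fg τ.1 - ∫ u in τ.1..(τ.1+1), stepFn x u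
        = ∫ u in τ.1..(τ.1+1), (fg τ.1 - stepFn x u) := by
      rw [integral_sub intervalIntegrable_const (stepFn_intervalIntegrable x _ _),
        intervalIntegral.integral_const]
      norm_num
    rw [hsub, e]
    have hbd : ∀ u ∈ Set.uIoc τ.1 (τ.1+1), ‖fg τ.1 - stepFn x u‖ ≤ W τ.1 := by
      intro u hu
      rw [Set.uIoc_of_le (by linarith : τ.1 ≤ τ.1+1)] at hu
      obtain ⟨hu1, hu2⟩ := hu
      have hu0 : (0:ℝ) ≤ u := by linarith
      have hfl0 : (0:ℤ) ≤ ⌊u⌋ := Int.floor_nonneg.2 hu0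
      have hq : ((⌊u⌋.toNat : ℕ) : ℝ) = ((⌊u⌋ : ℤ) : ℝ) := by
        exact_mod_cast Int.toNat_of_nonneg hfl0
      have hqval : stepFn x u = fg ((⌊u⌋.toNat : ℕ) : ℝ) := hx _
      rw [Real.norm_eq_abs, hqval]
      have hfloor_le : ((⌊u⌋ : ℤ) : ℝ) ≤ u := Int.floor_le u
      have hfloor_gt : u - 1 < ((⌊u⌋ : ℤ) : ℝ) := Int.sub_one_lt_floor u
      apply osc τ.1 τ.1 _ hτ (by linarith) (by linarith)
      · rw [hq]; linarith
      · rw [hq]; linarith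
    calc |∫ u in τ.1..(τ.1+1), (fg τ.1 - stepFn x u)|
        ≤ W τ.1 * |τ.1 + 1 - τ.1| := by
          simpa [Real.norm_eq_abs] using
            intervalIntegral.norm_integral_le_of_norm_le_const hbd
    _ = W τ.1 := by rw [show τ.1 + 1 - τ.1 = 1 by ring, abs_one, mul_one]
  -- the averaging argument
  have key : ∀ n : ℕ, 1 ≤ n → (n:ℝ) * |ξ h| ≤ 10 * B := by
    intro n hn
    have hn1 : (1:ℝ) ≤ (n:ℝ) := by exact_mod_cast hn
    set s : ℝ := (n:ℝ)^2 + 2 with hsdef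
    have hs3 : (3:ℝ) ≤ s := by nlinarith
    have hspos : ∀ j : ℕ, (0:ℝ) ≤ s + j := fun j => by positivity
    set G : Cb := ∑ j ∈ Finset.range n, translateCb (s + j) (hspos j) h with hGdef
    have hξG : ξ G = (n:ℝ) * ξ h := by
      rw [hGdef, map_sum]
      have hc : ∀ j ∈ Finset.range n, ξ (translateCb (s + (j:ℝ)) (hspos j) h) = ξ h := by
        intro j _
        have hjnn : (0:ℝ) ≤ (j:ℝ) := Nat.cast_nonneg j
        exact hξ.2.2 (s + (j:ℝ)) (by linarith) h
      rw [Finset.sum_congr rfl hc, Finset.sum_const, Finset.card_range, nsmul_eq_mul]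
    have hGb : ∀ t : Set.Ici (0:ℝ), |G t| ≤ 10 * B := by
      intro t
      have ht0 : (0:ℝ) ≤ t.1 := t.2
      set r : ℝ := t.1 + s with hrdef
      have hrs : s ≤ r := by linarith
      have hr1 : (0:ℝ) < r - 1 := by linarith
      have hGt : G t = ∑ j ∈ Finset.range n, h ⟨t.1 + (s+j), add_nonneg t.2 (hspos j)⟩ := by
        rw [hGdef, BoundedContinuousFunction.coe_sum, Finset.sum_apply]
        rfl
      rw [hGt]
      have step1 : ∀ j ∈ Finset.range n,
          |h ⟨t.1 + (s+j), add_nonneg t.2 (hspos j)⟩|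
            ≤ (A (r+j+1) - A (r+j-1) + 2*B) / (r-1) := by
        intro j hj
        have hjnn : (0:ℝ) ≤ (j:ℝ) := Nat.cast_nonneg j
        have h2rj : (2:ℝ) ≤ t.1 + (s+j) := by linarith
        have harg : t.1 + (s+(j:ℝ)) = r + j := by rw [hrdef]; ring
        have hnum_nn : 0 ≤ A (r+j+1) - A (r+j-1) + 2*B := by
          have := hA_mono (r+j-1) (r+j+1) (by linarith) (by linarith)
          linarith
        calc |h ⟨t.1 + (s+j), add_nonneg t.2 (hspos j)⟩|
            ≤ W (t.1 + (s+j)) := hnear _ h2rj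
        _ = W (r+j) := by rw [harg]
        _ = (A (r+j+1) - A (r+j-1) + 2*B)/(r+j-1) := rfl
        _ ≤ (A (r+j+1) - A (r+j-1) + 2*B)/(r-1) := by
            gcongr
            linarith
      have tele : ∑ j ∈ Finset.range n, (A (r+j+1) - A (r+j-1))
          = (A (r+(n:ℝ)) + A (r+(n:ℝ)-1)) - (A (r+((0:ℕ):ℝ)) + A (r+((0:ℕ):ℝ)-1)) := by
        have hts := Finset.sum_range_sub (f := fun j : ℕ => A (r+(j:ℝ)) + A (r+(j:ℝ)-1)) n
        rw [← hts]
        apply Finset.sum_congr rfl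
        intro j _
        rw [show (((j+1:ℕ)):ℝ) = (j:ℝ)+1 by push_cast; ring]
        rw [show r + ((j:ℝ)+1) - 1 = r + (j:ℝ) by ring, show r + ((j:ℝ)+1) = r+(j:ℝ)+1 by ring]
        ring
      have tele_le : ∑ j ∈ Finset.range n, (A (r+j+1) - A (r+j-1)) ≤ 2 * A (r+(n:ℝ)) := by
        rw [tele]
        have m1 : A (r+(n:ℝ)-1) ≤ A (r+(n:ℝ)) := hA_mono _ _ (by linarith) (by linarith)
        have m2 : 0 ≤ A (r+((0:ℕ):ℝ)-1) := hA_nonneg _ (by push_cast; linarith)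
        have m3 : 0 ≤ A (r+((0:ℕ):ℝ)) := hA_nonneg _ (by push_cast; linarith)
        linarith
      calc |∑ j ∈ Finset.range n, h ⟨t.1 + (s+j), add_nonneg t.2 (hspos j)⟩|
          ≤ ∑ j ∈ Finset.range n, |h ⟨t.1 + (s+j), add_nonneg t.2 (hspos j)⟩| :=
            Finset.abs_sum_le_sum_abs _ _
      _ ≤ ∑ j ∈ Finset.range n, (A (r+j+1) - A (r+j-1) + 2*B)/(r-1) :=
            Finset.sum_le_sum step1
      _ = ((∑ j ∈ Finset.range n, (A (r+j+1) - A (r+j-1))) + (n:ℝ)*(2*B))/(r-1) := by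
            rw [← Finset.sum_div, Finset.sum_add_distrib, Finset.sum_const, Finset.card_range,
              nsmul_eq_mul]
      _ ≤ (2 * A (r+(n:ℝ)) + (n:ℝ)*(2*B))/(r-1) :=
            (div_le_div_iff_of_pos_right hr1).2 (by linarith [tele_le])
      _ ≤ (2 * (B * ((r+(n:ℝ))+1)) + (n:ℝ)*(2*B))/(r-1) := by
            gcongr
            calc A (r+(n:ℝ)) ≤ B * L (r+(n:ℝ)) := hAB _ (by linarith)
            _ ≤ B * ((r+(n:ℝ))+1) := mul_le_mul_of_nonneg_left (hL_le _ (by linarith)) hB0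
      _ ≤ 10 * B := by
            rw [div_le_iff₀ hr1]
            have hs' : (n:ℝ)^2 + 2 ≤ r := hsdef ▸ hrs
            have h2rn3 : (0:ℝ) ≤ 2*r - (n:ℝ) - 3 := by nlinarith
            linarith [mul_nonneg hB0 h2rn3]
    have hGnorm : ‖G‖ ≤ 10*B := by
      apply (BoundedContinuousFunction.norm_le (by positivity)).2
      intro t
      rw [Real.norm_eq_abs]
      exact hGb t
    calc (n:ℝ) * |ξ h| = |ξ G| := by
          rw [hξG, abs_mul, abs_of_nonneg (by positivity : (0:ℝ) ≤ (n:ℝ))]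
    _ ≤ ‖G‖ := xiBound ξ hξ G
    _ ≤ 10*B := hGnorm
  have hzero : ξ h = 0 := by
    by_contra hne
    have hcpos : 0 < |ξ h| := abs_pos.2 hne
    obtain ⟨n, hn⟩ := exists_nat_gt ((10*B)/|ξ h|)
    have hdivnn : 0 ≤ (10*B)/|ξ h| := by positivity
    have hn1 : 1 ≤ n := by
      rcases Nat.eq_zero_or_pos n with h0 | h1
      · rw [h0] at hn; norm_num at hn; linarith
      · exact h1
    have hk := key n hn1
    rw [div_lt_iff₀ hcpos] at hn
    linarith
  have heq : ξ F - ξ (smoothCb x) = 0 := by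
    rw [← map_sub, ← hhdef]
    exact hzero
  have hfinal : (xiLp ξ) x = ξ (smoothCb x) := rfl
  rw [hfinal]
  linarith
end
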